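/- arXiv:2002.00354 — 9 statements merged into one kernel-verified Lean document; each statement's English description precedes it below -/
import Mathlib

section
/- Let β, γ > 0 and let (S, I) : ℝ → ℝ² be a solution of the SIR layer equation S' = −β S I, I' = I(β S − γ) with S(t) > 0 and I(t) > 0 for all t ∈ ℝ. Then there exist real numbers S₊ and S₋ with 0 < S₊ ≤ γ/β ≤ S₋ such that (S(t), I(t)) → (S₊, 0) as t → +∞ and (S(t), I(t)) → (S₋, 0) as t → −∞; moreover γ·log S₊ − β·S₊ = Γ(S(0), I(0)) and γ·log S₋ − β·S₋ = Γ(S(0), I(0)). In other words, every orbit of the layer equation in the open first quadrant is heteroclinic between two points on the S-axis lying on the same level set of Γ. -/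
open Filter Topology Set

/-! Along a solution, `Γ(S, I) = γ log S - β (S + I)` is a first integral and `S` strictly
decreases. On the `S`-axis, `x ↦ Γ(x, 0)` tends to `-∞` both as `x → 0⁺` and as `x → ∞`,
so the level set of `Γ` through the orbit keeps `S` in an interval `[a, b]` with `a > 0`.
Hence `S` has limits `S₊ < S₋` at `±∞`, and so does `I = (Γ(S, 0) - Γ(S, I)) / β`. The
limit of `S'` along a convergent `S` must vanish, which forces `I → 0`; so `S₊` and `S₋` lie
on the level set of `Γ(S(0), I(0))`, and Rolle's theorem for `x ↦ Γ(x, 0)` puts its critical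
point `γ / β` between them. The end `t → -∞` is the end `t → +∞` of the time-reversed
system, which is the SIR system with parameters `-β, -γ` and invariant `-Γ`. -/

noncomputable def sirInvariant (β γ S I : ℝ) : ℝ := γ * Real.log S - β * (S + I)

structure IsSIRSolution (β γ : ℝ) (S I : ℝ → ℝ) : Prop where
  hasDerivAt_S : ∀ t, HasDerivAt S (-β * S t * I t) t
  hasDerivAt_I : ∀ t, HasDerivAt I (I t * (β * S t - γ)) t

theorem sirInvariant_neg (β γ S I : ℝ) :
    sirInvariant (-β) (-γ) S I = -sirInvariant β γ S I := by
  unfold sirInvariant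
  ring

theorem eq_zero_of_tendsto_of_tendsto_deriv_atTop {f f' : ℝ → ℝ} {a ℓ : ℝ}
    (hf : ∀ t, HasDerivAt f (f' t) t) (hfa : Tendsto f atTop (𝓝 a))
    (hf' : Tendsto f' atTop (𝓝 ℓ)) : ℓ = 0 := by
  have hmvt : ∀ t, ∃ ξ ∈ Ioo t (t + 1), f' ξ = f (t + 1) - f t := fun t => by
    simpa using exists_hasDerivAt_eq_slope f f' (lt_add_one t)
      (fun x _ => (hf x).continuousAt.continuousWithinAt) (fun x _ => hf x)
  choose ξ hξ hξf using hmvt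
  have hξ_top : Tendsto ξ atTop atTop := tendsto_atTop_mono (fun t => (hξ t).1.le) tendsto_id
  have hincr : Tendsto (fun t => f (t + 1) - f t) atTop (𝓝 (a - a)) :=
    (hfa.comp (tendsto_atTop_add_const_right _ 1 tendsto_id)).sub hfa
  rw [sub_self] at hincr
  exact tendsto_nhds_unique (hf'.comp hξ_top) (hincr.congr fun t => (hξf t).symm)

theorem StrictAnti.exists_tendsto_atTop_atBot {f : ℝ → ℝ} (hf : StrictAnti f) {a b : ℝ}
    (hab : ∀ t, f t ∈ Icc a b) :
    ∃ p m, a ≤ p ∧ p < m ∧ Tendsto f atTop (𝓝 p) ∧ Tendsto f atBot (𝓝 m) := by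
  have hbdd_below : BddBelow (range f) := ⟨a, forall_mem_range.2 fun t => (hab t).1⟩
  have hbdd_above : BddAbove (range f) := ⟨b, forall_mem_range.2 fun t => (hab t).2⟩
  exact ⟨⨅ t, f t, ⨆ t, f t, le_ciInf fun t => (hab t).1,
    (ciInf_le hbdd_below 1).trans_lt ((hf zero_lt_one).trans_le (le_ciSup hbdd_above 0)),
    tendsto_atTop_ciInf hf.antitone hbdd_below, tendsto_atBot_ciSup hf.antitone hbdd_above⟩

section Axis

variable {β γ : ℝ}

theorem hasDerivAt_sirInvariant_axis {x : ℝ} (hx : x ≠ 0) :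
    HasDerivAt (fun x => sirInvariant β γ x 0) (γ / x - β) x := by
  have h : HasDerivAt (fun x => γ * Real.log x - β * x) (γ * x⁻¹ - β * 1) x :=
    ((Real.hasDerivAt_log hx).const_mul γ).sub ((hasDerivAt_id x).const_mul β)
  simpa [sirInvariant, div_eq_mul_inv] using h

theorem tendsto_sirInvariant_axis_atTop (hβ : 0 < β) :
    Tendsto (fun x => sirInvariant β γ x 0) atTop atBot := by
  have hratio : Tendsto (fun x => γ * (Real.log x / x) - β) atTop (𝓝 (γ * 0 - β)) :=
    (Real.isLittleO_log_id_atTop.tendsto_div_nhds_zero.const_mul γ).sub_const β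
  rw [mul_zero, zero_sub] at hratio
  refine (tendsto_id.atTop_mul_neg (neg_neg_of_pos hβ) hratio).congr' ?_
  filter_upwards [eventually_gt_atTop 0] with x hx
  simp only [sirInvariant, id, add_zero]
  field_simp

theorem tendsto_sirInvariant_axis_nhdsGT_zero (hγ : 0 < γ) :
    Tendsto (fun x => sirInvariant β γ x 0) (𝓝[>] 0) atBot := by
  have hlin : Tendsto (fun x : ℝ => -(β * x)) (𝓝[>] 0) (𝓝 (-(β * 0))) :=
    ((continuous_const.mul continuous_id).neg.tendsto 0).mono_left nhdsWithin_le_nhds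
  simpa [sirInvariant, sub_eq_add_neg] using
    (Real.tendsto_log_nhdsGT_zero.const_mul_atBot hγ).atBot_add hlin

theorem exists_superlevelSet_sirInvariant_axis_subset_Icc (hβ : 0 < β) (hγ : 0 < γ) (c : ℝ) :
    ∃ a b, 0 < a ∧ {x | 0 < x ∧ c ≤ sirInvariant β γ x 0} ⊆ Icc a b := by
  obtain ⟨b, hb⟩ := eventually_atTop.1
    ((tendsto_sirInvariant_axis_atTop hβ).eventually (eventually_lt_atBot c))
  obtain ⟨a, ha, hab⟩ := mem_nhdsGT_iff_exists_Ioo_subset.1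
    ((tendsto_sirInvariant_axis_nhdsGT_zero hγ).eventually (eventually_lt_atBot c))
  refine ⟨a, b, ha, fun x ⟨hx, hc⟩ => ⟨?_, ?_⟩⟩
  · by_contra! hxa
    exact (show sirInvariant β γ x 0 < c from hab ⟨hx, hxa⟩).not_ge hc
  · by_contra! hxb
    exact (hb x hxb.le).not_ge hc

theorem div_mem_Ioo_of_sirInvariant_axis_eq (hβ : β ≠ 0) {x y : ℝ} (hx : 0 < x) (hxy : x < y)
    (h : sirInvariant β γ x 0 = sirInvariant β γ y 0) : γ / β ∈ Ioo x y := by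
  have hderiv : ∀ z ∈ Ioi 0, HasDerivAt (fun x => sirInvariant β γ x 0) (γ / z - β) z :=
    fun z hz => hasDerivAt_sirInvariant_axis (ne_of_gt hz)
  obtain ⟨ξ, hξ, hξ0⟩ := exists_hasDerivAt_eq_zero hxy
    (fun z hz => (hderiv z (hx.trans_le hz.1)).continuousAt.continuousWithinAt) h
    (fun z hz => hderiv z (hx.trans hz.1))
  have hξ_pos : 0 < ξ := hx.trans hξ.1
  have hξ_eq : ξ = γ / β := by
    field_simp at hξ0 ⊢
    linarith
  exact hξ_eq ▸ hξ

end Axis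

namespace IsSIRSolution

variable {β γ : ℝ} {S I : ℝ → ℝ}

theorem comp_neg (h : IsSIRSolution β γ S I) :
    IsSIRSolution (-β) (-γ) (fun t => S (-t)) (fun t => I (-t)) where
  hasDerivAt_S t := by
    simpa [Function.comp_def] using (h.hasDerivAt_S (-t)).comp t (hasDerivAt_neg t)
  hasDerivAt_I t := by
    have h' := (h.hasDerivAt_I (-t)).comp t (hasDerivAt_neg t)
    rw [Function.comp_def] at h'
    exact h'.congr_deriv (by ring)

theorem sirInvariant_eq (h : IsSIRSolution β γ S I) (hS : ∀ t, S t ≠ 0) (t s : ℝ) :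
    sirInvariant β γ (S t) (I t) = sirInvariant β γ (S s) (I s) := by
  have hderiv : ∀ t, HasDerivAt (fun t => sirInvariant β γ (S t) (I t)) 0 t := fun t => by
    have h' : HasDerivAt (fun t => γ * Real.log (S t) - β * (S t + I t))
        (γ * (-β * S t * I t / S t) - β * (-β * S t * I t + I t * (β * S t - γ))) t :=
      (((h.hasDerivAt_S t).log (hS t)).const_mul γ).sub
        (((h.hasDerivAt_S t).add (h.hasDerivAt_I t)).const_mul β)
    refine h'.congr_deriv ?_
    field_simp [hS t]
    ring
  exact is_const_of_deriv_eq_zero (fun t => (hderiv t).differentiableAt)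
    (fun t => (hderiv t).deriv) t s

theorem strictAnti (h : IsSIRSolution β γ S I) (hβ : 0 < β) (hS : ∀ t, 0 < S t)
    (hI : ∀ t, 0 < I t) : StrictAnti S :=
  strictAnti_of_deriv_neg fun t => by
    rw [(h.hasDerivAt_S t).deriv, neg_mul, neg_mul, neg_neg_iff_pos]
    exact mul_pos (mul_pos hβ (hS t)) (hI t)

theorem tendsto_atTop (h : IsSIRSolution β γ S I) (hβ : β ≠ 0) (hS : ∀ t, S t ≠ 0)
    {s : ℝ} (hs : Tendsto S atTop (𝓝 s)) (hs0 : s ≠ 0) :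
    Tendsto I atTop (𝓝 0) ∧ sirInvariant β γ s 0 = sirInvariant β γ (S 0) (I 0) := by
  set c := sirInvariant β γ (S 0) (I 0)
  have hI_eq : I = fun t => (sirInvariant β γ (S t) 0 - c) / β := funext fun t => by
    rw [show c = sirInvariant β γ (S t) (I t) from (h.sirInvariant_eq hS t 0).symm]
    unfold sirInvariant
    field_simp
    ring
  set L := (sirInvariant β γ s 0 - c) / β
  have hIL : Tendsto I atTop (𝓝 L) := by
    rw [hI_eq]
    have hΓ := (hasDerivAt_sirInvariant_axis (β := β) (γ := γ) hs0).continuousAt.tendsto.comp hs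
    exact (hΓ.sub_const c).div_const β
  have hL : -β * s * L = 0 :=
    eq_zero_of_tendsto_of_tendsto_deriv_atTop h.hasDerivAt_S hs
      ((tendsto_const_nhds.mul hs).mul hIL)
  have hL0 : L = 0 := by simpa [hβ, hs0] using hL
  refine ⟨hL0 ▸ hIL, ?_⟩
  simpa [L, hβ, sub_eq_zero] using hL0

theorem tendsto_atBot (h : IsSIRSolution β γ S I) (hβ : β ≠ 0) (hS : ∀ t, S t ≠ 0)
    {s : ℝ} (hs : Tendsto S atBot (𝓝 s)) (hs0 : s ≠ 0) :
    Tendsto I atBot (𝓝 0) ∧ sirInvariant β γ s 0 = sirInvariant β γ (S 0) (I 0) := by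
  obtain ⟨hI, hΓ⟩ := h.comp_neg.tendsto_atTop (neg_ne_zero.2 hβ) (fun t => hS (-t))
    (hs.comp tendsto_neg_atTop_atBot) hs0
  refine ⟨?_, by simpa [sirInvariant_neg] using hΓ⟩
  simpa [Function.comp_def] using hI.comp tendsto_neg_atBot_atTop

end IsSIRSolution

/-- Every orbit of the SIR layer equation `S' = -β S I`, `I' = I (β S - γ)` in the
open first quadrant is heteroclinic between two points on the `S`-axis lying on the
same level set of `Γ(S, I) = γ log S - β (S + I)`. -/
theorem sir_layer_heteroclinic
    (β γ : ℝ) (hβ : 0 < β) (hγ : 0 < γ)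
    (S I : ℝ → ℝ)
    (hS : ∀ t : ℝ, HasDerivAt S (-β * S t * I t) t)
    (hI : ∀ t : ℝ, HasDerivAt I (I t * (β * S t - γ)) t)
    (hSpos : ∀ t : ℝ, 0 < S t) (hIpos : ∀ t : ℝ, 0 < I t) :
    ∃ Splus Sminus : ℝ,
      0 < Splus ∧ Splus ≤ γ / β ∧ γ / β ≤ Sminus ∧
      Tendsto (fun t => (S t, I t)) atTop (nhds (Splus, 0)) ∧
      Tendsto (fun t => (S t, I t)) atBot (nhds (Sminus, 0)) ∧
      γ * Real.log Splus - β * Splus = γ * Real.log (S 0) - β * (S 0 + I 0) ∧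
      γ * Real.log Sminus - β * Sminus = γ * Real.log (S 0) - β * (S 0 + I 0) := by
  have h : IsSIRSolution β γ S I := ⟨hS, hI⟩
  have hS0 : ∀ t, S t ≠ 0 := fun t => (hSpos t).ne'
  obtain ⟨a, b, ha, hab⟩ :=
    exists_superlevelSet_sirInvariant_axis_subset_Icc hβ hγ (sirInvariant β γ (S 0) (I 0))
  have hS_mem : ∀ t, S t ∈ Icc a b := fun t => hab ⟨hSpos t, by
    rw [← h.sirInvariant_eq hS0 t 0]
    unfold sirInvariant
    linarith [mul_pos hβ (hIpos t)]⟩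
  obtain ⟨Splus, Sminus, haSplus, hlt, htop, hbot⟩ :=
    (h.strictAnti hβ hSpos hIpos).exists_tendsto_atTop_atBot hS_mem
  have hSplus : 0 < Splus := ha.trans_le haSplus
  obtain ⟨hItop, hΓtop⟩ := h.tendsto_atTop hβ.ne' hS0 htop hSplus.ne'
  obtain ⟨hIbot, hΓbot⟩ := h.tendsto_atBot hβ.ne' hS0 hbot (hSplus.trans hlt).ne'
  obtain ⟨hlow, hhigh⟩ :=
    div_mem_Ioo_of_sirInvariant_axis_eq hβ.ne' hSplus hlt (hΓtop.trans hΓbot.symm)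
  refine ⟨Splus, Sminus, hSplus, hlow.le, hhigh.le, htop.prodMk_nhds hItop,
    hbot.prodMk_nhds hIbot, ?_, ?_⟩
  · simpa [sirInvariant] using hΓtop
  · simpa [sirInvariant] using hΓbot
end

section
/- Let β > γ > 0. For every S₀ > γ/β there exists a unique S_∞ ∈ (0, γ/β) such that γ·log S_∞ − β·S_∞ = γ·log S₀ − β·S₀. -/
open Filter Topology Set Real

/-!
On `(0, ∞)` the map `S ↦ γ log S - β S` has derivative `γ / S - β`, so it increases strictly on
`(0, γ/β]` and decreases strictly on `[γ/β, ∞)`. Hence its value at `S₀ > γ/β` lies below its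
maximum; since it tends to `-∞` as `S → 0⁺`, the intermediate value theorem gives a preimage in
`(0, γ/β)`, unique by strict monotonicity there.
-/

theorem existsUnique_mem_Ioo_eq_of_strictMonoOn {f : ℝ → ℝ} {a b c : ℝ} (hab : a < b)
    (hmono : StrictMonoOn f (Ioc a b)) (hcont : ContinuousOn f (Ioc a b))
    (hlim : Tendsto f (𝓝[>] a) atBot) (hc : c < f b) :
    ∃! x, x ∈ Ioo a b ∧ f x = c := by
  obtain ⟨a', hfa', ha'⟩ := ((hlim.eventually_lt_atBot c).and (Ioo_mem_nhdsGT hab)).exists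
  obtain ⟨x, hx, hfx⟩ := intermediate_value_Ico ha'.2.le
    (hcont.mono (Icc_subset_Ioc_iff ha'.2.le |>.mpr ⟨ha'.1, le_rfl⟩)) ⟨hfa'.le, hc⟩
  refine ⟨x, ⟨⟨ha'.1.trans_le hx.1, hx.2⟩, hfx⟩, fun y ⟨hy, hfy⟩ => ?_⟩
  exact hmono.injOn (Ioo_subset_Ioc_self hy) ⟨ha'.1.trans_le hx.1, hx.2.le⟩ (hfy.trans hfx.symm)

noncomputable def sirLevel (β γ S : ℝ) : ℝ := γ * log S - β * S

section sirLevel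

variable {β γ : ℝ}

theorem hasDerivAt_sirLevel {x : ℝ} (hx : x ≠ 0) :
    HasDerivAt (sirLevel β γ) (γ / x - β) x := by
  have h := ((hasDerivAt_log hx).const_mul γ).sub ((hasDerivAt_id x).const_mul β)
  rwa [mul_one, ← div_eq_mul_inv] at h

theorem continuousOn_sirLevel : ContinuousOn (sirLevel β γ) (Ioi 0) := fun _ hx =>
  (hasDerivAt_sirLevel (ne_of_gt hx)).continuousAt.continuousWithinAt

theorem strictMonoOn_sirLevel (hβ : 0 < β) : StrictMonoOn (sirLevel β γ) (Ioc 0 (γ / β)) := by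
  refine strictMonoOn_of_deriv_pos (convex_Ioc 0 _) (continuousOn_sirLevel.mono Ioc_subset_Ioi_self)
    fun x hx => ?_
  rw [interior_Ioc] at hx
  rw [(hasDerivAt_sirLevel hx.1.ne').deriv, sub_pos, lt_div_iff₀ hx.1]
  exact (lt_div_iff₀' hβ).mp hx.2

theorem strictAntiOn_sirLevel (hβ : 0 < β) (hγ : 0 < γ) :
    StrictAntiOn (sirLevel β γ) (Ici (γ / β)) := by
  have hb : 0 < γ / β := div_pos hγ hβ
  refine strictAntiOn_of_deriv_neg (convex_Ici _)
    (continuousOn_sirLevel.mono fun x hx => hb.trans_le hx) fun x hx => ?_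
  rw [interior_Ici] at hx
  have hx0 : 0 < x := hb.trans hx
  rw [(hasDerivAt_sirLevel hx0.ne').deriv, sub_neg, div_lt_iff₀ hx0]
  exact (div_lt_iff₀' hβ).mp hx

theorem tendsto_sirLevel_nhdsGT_zero (hγ : 0 < γ) : Tendsto (sirLevel β γ) (𝓝[>] 0) atBot := by
  have hlin : Continuous fun S : ℝ => -(β * S) := by fun_prop
  have h := (tendsto_log_nhdsGT_zero.const_mul_atBot hγ).atBot_add hlin.continuousWithinAt
  simp only [← sub_eq_add_neg] at h
  exact h

end sirLevel

/-- For `β > γ > 0` and every `S₀ > γ/β` there is a unique `S_∞ ∈ (0, γ/β)` on the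
same level set of `S ↦ γ log S - β S`. -/
theorem sir_unique_Sinfty
    (β γ : ℝ) (hγ : 0 < γ) (hβγ : γ < β) :
    ∀ S₀ : ℝ, γ / β < S₀ →
      ∃! Sinf : ℝ, Sinf ∈ Set.Ioo 0 (γ / β) ∧
        γ * Real.log Sinf - β * Sinf = γ * Real.log S₀ - β * S₀ := by
  intro S₀ hS₀
  have hβ : 0 < β := hγ.trans hβγ
  have hb : 0 < γ / β := div_pos hγ hβ
  exact existsUnique_mem_Ioo_eq_of_strictMonoOn hb (strictMonoOn_sirLevel hβ)
    (continuousOn_sirLevel.mono Ioc_subset_Ioi_self) (tendsto_sirLevel_nhdsGT_zero hγ)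
    (strictAntiOn_sirLevel hβ hγ self_mem_Ici hS₀.le hS₀)
end

section
/- Let β, γ, ξ, ε > 0 with β > γ + ε ξ, and set S_E = (γ + ε ξ)/β and I_E = ε ξ (1 − S_E)/(β S_E). Then every solution (S, I) of the fast-time SIR system with initial condition satisfying S(0) ≥ 0, I(0) > 0 and S(0) + I(0) ≤ 1, defined for all t ≥ 0, converges to the endemic equilibrium: (S(t), I(t)) → (S_E, I_E) as t → +∞. -/
/-!
The region `S ≥ 0, I > 0, S + I ≤ 1` is forward invariant, and `S` is eventually bounded below by
a positive constant: `I`, `S`, `1 - S - I` and `S - μ / (μ + β)` each satisfy a linear equation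
`f' = h - g f` with `h ≥ 0`, so `f · exp (∫ g)` is monotone. On that region the Volterra function
`V = Σ (v - E - E log (v / E))` has `V' = -(μ + β I_E) (S - S_E)² / S`, and adding a small multiple
of `(S - S_E) (I - I_E)` yields a strict Lyapunov function: its derivative is at most
`-c |(S, I) - (S_E, I_E)|²` while it stays above `k |(S, I) - (S_E, I_E)|²`.
-/

open Filter Set Topology

section Monotonicity

variable {f f' : ℝ → ℝ} {a : ℝ}

theorem monotoneOn_Ici_of_hasDerivAt_nonneg (hf : ∀ t ≥ a, HasDerivAt f (f' t) t)
    (hf' : ∀ t ≥ a, 0 ≤ f' t) : MonotoneOn f (Ici a) :=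
  monotoneOn_of_hasDerivWithinAt_nonneg (convex_Ici a)
    (fun t ht => (hf t ht).continuousAt.continuousWithinAt)
    (fun t ht => (hf t (interior_subset ht)).hasDerivWithinAt)
    (fun t ht => hf' t (interior_subset ht))

theorem antitoneOn_Ici_of_hasDerivAt_nonpos (hf : ∀ t ≥ a, HasDerivAt f (f' t) t)
    (hf' : ∀ t ≥ a, f' t ≤ 0) : AntitoneOn f (Ici a) :=
  antitoneOn_of_hasDerivWithinAt_nonpos (convex_Ici a)
    (fun t ht => (hf t ht).continuousAt.continuousWithinAt)
    (fun t ht => (hf t (interior_subset ht)).hasDerivWithinAt)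
    (fun t ht => hf' t (interior_subset ht))

theorem exists_lt_of_hasDerivAt_le_neg {ν : ℝ} (hν : 0 < ν) (hf : ∀ t ≥ a, HasDerivAt f (f' t) t)
    (hf' : ∀ t ≥ a, f' t ≤ -ν) (b : ℝ) : ∃ t ≥ a, f t < b := by
  have hanti : AntitoneOn (fun t => f t + ν * t) (Ici a) :=
    antitoneOn_Ici_of_hasDerivAt_nonpos
      (fun t ht => (hf t ht).add ((hasDerivAt_id t).const_mul ν))
      (fun t ht => by linarith [hf' t ht])
  set t := a + (|f a - b| + 1) / ν
  have hat : a ≤ t := le_add_of_nonneg_right (by positivity)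
  refine ⟨t, hat, ?_⟩
  have hdrop : ν * (t - a) = |f a - b| + 1 := by simp only [t]; field_simp; ring
  have := hanti self_mem_Ici hat hat
  simp only at this
  linarith [le_abs_self (f a - b)]

end Monotonicity

theorem exists_hasDerivAt_of_continuousOn_Ici {g : ℝ → ℝ} {a : ℝ} (hg : ContinuousOn g (Ici a)) :
    ∃ G : ℝ → ℝ, ∀ t ≥ a, HasDerivAt G (g t) t := by
  have hext : Continuous fun s => g (max s a) :=
    hg.comp_continuous (continuous_id.max continuous_const) fun s => le_max_right s a
  refine ⟨fun u => ∫ s in a..u, g (max s a), fun t ht => ?_⟩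
  simpa [max_eq_left ht] using (hext.integral_hasStrictDerivAt a t).hasDerivAt

section IntegratingFactor

variable {f g h : ℝ → ℝ} {a : ℝ}

theorem monotoneOn_mul_exp_of_hasDerivAt {G : ℝ → ℝ} (hG : ∀ t ≥ a, HasDerivAt G (g t) t)
    (hf : ∀ t ≥ a, HasDerivAt f (h t - g t * f t) t) (hh : ∀ t ≥ a, 0 ≤ h t) :
    MonotoneOn (fun t => f t * Real.exp (G t)) (Ici a) :=
  monotoneOn_Ici_of_hasDerivAt_nonneg (fun t ht => ((hf t ht).mul (hG t ht).exp).congr_deriv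
      (by ring : _ = h t * Real.exp (G t)))
    (fun t ht => mul_nonneg (hh t ht) (Real.exp_pos _).le)

theorem pos_of_hasDerivAt_eq_sub_mul (hg : ContinuousOn g (Ici a))
    (hf : ∀ t ≥ a, HasDerivAt f (h t - g t * f t) t) (hh : ∀ t ≥ a, 0 ≤ h t) (ha : 0 < f a) :
    ∀ t ≥ a, 0 < f t := by
  obtain ⟨G, hG⟩ := exists_hasDerivAt_of_continuousOn_Ici hg
  intro t ht
  have := monotoneOn_mul_exp_of_hasDerivAt hG hf hh self_mem_Ici ht ht
  exact pos_of_mul_pos_left ((mul_pos ha (Real.exp_pos _)).trans_le this) (Real.exp_pos _).le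

theorem nonneg_of_hasDerivAt_eq_sub_mul (hg : ContinuousOn g (Ici a))
    (hf : ∀ t ≥ a, HasDerivAt f (h t - g t * f t) t) (hh : ∀ t ≥ a, 0 ≤ h t) (ha : 0 ≤ f a) :
    ∀ t ≥ a, 0 ≤ f t := by
  obtain ⟨G, hG⟩ := exists_hasDerivAt_of_continuousOn_Ici hg
  intro t ht
  have := monotoneOn_mul_exp_of_hasDerivAt hG hf hh self_mem_Ici ht ht
  exact nonneg_of_mul_nonneg_left ((mul_nonneg ha (Real.exp_pos _).le).trans this) (Real.exp_pos _)

end IntegratingFactor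

theorem tendsto_of_hasDerivAt_lyapunov {X : Type*} [PseudoMetricSpace X] {V : X → ℝ} {x : ℝ → X}
    {V' : ℝ → ℝ} {p : X} {T c k : ℝ} (hc : 0 < c) (hk : 0 < k) (hVp : ContinuousAt V p)
    (hV : ∀ t ≥ T, HasDerivAt (fun t => V (x t)) (V' t) t)
    (hV' : ∀ t ≥ T, V' t ≤ -c * dist (x t) p ^ 2)
    (hlow : ∀ t ≥ T, k * dist (x t) p ^ 2 ≤ V (x t) - V p) :
    Tendsto x atTop (𝓝 p) := by
  have hge : ∀ t ≥ T, V p ≤ V (x t) := fun t ht => by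
    nlinarith [hlow t ht, sq_nonneg (dist (x t) p)]
  have hanti : AntitoneOn (fun t => V (x t)) (Ici T) :=
    antitoneOn_Ici_of_hasDerivAt_nonpos hV fun t ht => by
      nlinarith [hV' t ht, sq_nonneg (dist (x t) p)]
  have hVlim : Tendsto (fun t => V (x t)) atTop (𝓝 (V p)) := by
    rw [Metric.tendsto_atTop]
    intro η hη
    obtain ⟨δ, hδ, hball⟩ := Metric.continuousAt_iff.mp hVp η hη
    -- Outside the `δ`-ball `V` decreases at rate `c δ²`, so the orbit must enter it.
    obtain ⟨t₀, hTt₀, ht₀⟩ : ∃ t₀ ≥ T, V (x t₀) < V p + η := by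
      by_contra! hfar
      have hδle : ∀ t ≥ T, δ ≤ dist (x t) p := fun t ht => by
        by_contra! hnear
        have := (abs_lt.mp (hball hnear)).2
        linarith [hfar t ht]
      obtain ⟨t, ht, hlt⟩ := exists_lt_of_hasDerivAt_le_neg (mul_pos hc (pow_pos hδ 2)) hV
        (fun t ht => by nlinarith [hV' t ht, pow_le_pow_left₀ hδ.le (hδle t ht) 2]) (V p)
      linarith [hge t ht]
    refine ⟨t₀, fun t ht => ?_⟩
    have hTt : t ∈ Ici T := le_trans hTt₀ ht
    rw [Real.dist_eq, abs_lt]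
    constructor <;> linarith [hge t hTt, hanti hTt₀ hTt ht]
  have hdist_sq : Tendsto (fun t => dist (x t) p ^ 2) atTop (𝓝 0) := by
    refine squeeze_zero' (Eventually.of_forall fun t => sq_nonneg _) ?_
      (by simpa using (hVlim.sub_const (V p)).div_const k)
    filter_upwards [eventually_ge_atTop T] with t ht
    rw [le_div_iff₀ hk]
    linarith [hlow t ht]
  refine tendsto_iff_dist_tendsto_zero.mpr ?_
  simpa [Real.sqrt_sq dist_nonneg] using hdist_sq.sqrt

noncomputable def volterra (E v : ℝ) : ℝ := v - E - E * (Real.log v - Real.log E)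

theorem volterra_self (E : ℝ) : volterra E E = 0 := by simp [volterra]

theorem hasDerivAt_volterra (E : ℝ) {v : ℝ} (hv : v ≠ 0) :
    HasDerivAt (volterra E) (1 - E / v) v := by
  rw [div_eq_mul_inv]
  exact ((hasDerivAt_id v).sub_const E).sub
    (((Real.hasDerivAt_log hv).sub_const (Real.log E)).const_mul E)

theorem continuousAt_volterra (E : ℝ) {v : ℝ} (hv : v ≠ 0) : ContinuousAt (volterra E) v :=
  (hasDerivAt_volterra E hv).continuousAt

theorem sq_sqrt_sub_sqrt_le_volterra {E v : ℝ} (hE : 0 < E) (hv : 0 < v) :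
    (√v - √E) ^ 2 ≤ volterra E v := by
  set p := √v
  set q := √E
  have hp : 0 < p := Real.sqrt_pos.mpr hv
  have hq : 0 < q := Real.sqrt_pos.mpr hE
  have hvp : v = p ^ 2 := (Real.sq_sqrt hv.le).symm
  have hEq : E = q ^ 2 := (Real.sq_sqrt hE.le).symm
  have hlog : q ^ 2 * (Real.log p - Real.log q) ≤ p * q - q ^ 2 := by
    have h := Real.log_le_sub_one_of_pos (div_pos hp hq)
    rw [Real.log_div hp.ne' hq.ne'] at h
    calc q ^ 2 * (Real.log p - Real.log q) ≤ q ^ 2 * (p / q - 1) := by gcongr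
      _ = p * q - q ^ 2 := by field_simp
  have : volterra E v = p ^ 2 - q ^ 2 - 2 * (q ^ 2 * (Real.log p - Real.log q)) := by
    rw [volterra, hvp, hEq, Real.log_pow, Real.log_pow]; push_cast; ring
  rw [this]; nlinarith

theorem sq_sub_le_four_mul_volterra {E v : ℝ} (hE : 0 < E) (hE1 : E ≤ 1) (hv : 0 < v)
    (hv1 : v ≤ 1) : (v - E) ^ 2 ≤ 4 * volterra E v := by
  have hsum : √v + √E ≤ 2 := by
    linarith [Real.sqrt_le_one.mpr hv1, Real.sqrt_le_one.mpr hE1]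
  have hfactor : (v - E) ^ 2 = (√v - √E) ^ 2 * (√v + √E) ^ 2 := by
    rw [← mul_pow, show (√v - √E) * (√v + √E) = √v ^ 2 - √E ^ 2 by ring,
      Real.sq_sqrt hv.le, Real.sq_sqrt hE.le]
  have hsq : (√v + √E) ^ 2 ≤ 4 := by nlinarith [Real.sqrt_nonneg v, Real.sqrt_nonneg E]
  rw [hfactor]
  nlinarith [sq_sqrt_sub_sqrt_le_volterra hE hv, sq_nonneg (√v - √E)]

theorem dist_sq_le_sq_add_sq (a b c d : ℝ) :
    dist (a, b) (c, d) ^ 2 ≤ (a - c) ^ 2 + (b - d) ^ 2 := by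
  rw [Prod.dist_eq, Real.dist_eq, Real.dist_eq]
  rcases le_total |a - c| |b - d| with h | h
  · rw [max_eq_right h, sq_abs]; nlinarith [sq_nonneg (a - c)]
  · rw [max_eq_left h, sq_abs]; nlinarith [sq_nonneg (b - d)]

noncomputable def sirLyapunov (SE IE a : ℝ) (q : ℝ × ℝ) : ℝ :=
  volterra SE q.1 + volterra IE q.2 + a * ((q.1 - SE) * (q.2 - IE))

theorem sirLyapunov_deriv_le {β m a σ s i x y : ℝ} (hβ : 0 ≤ β) (ha : 0 ≤ a)
    (haβ : 4 * a * β ≤ m) (ham : 2 * a * m ≤ β * σ) (hs : 0 < s) (hσs : σ ≤ s) (hs1 : s ≤ 1)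
    (hi1 : i ≤ 1) :
    -(m * x ^ 2) / s + a * (β * i * x ^ 2 - m * x * y - β * s * y ^ 2)
      ≤ -(m / 2 * x ^ 2 + a * β * σ / 2 * y ^ 2) := by
  have hm : 0 ≤ m := by nlinarith
  have hSterm : -(m * x ^ 2) / s ≤ -(m * x ^ 2) := by
    rw [div_le_iff₀ hs]; nlinarith [mul_nonneg hm (sq_nonneg x)]
  have hIterm : a * β * i * x ^ 2 ≤ a * β * x ^ 2 := by
    nlinarith [mul_nonneg (mul_nonneg ha hβ) (sq_nonneg x)]
  have hσterm : a * β * σ * y ^ 2 ≤ a * β * s * y ^ 2 := by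
    nlinarith [mul_nonneg (mul_nonneg ha hβ) (sq_nonneg y)]
  -- AM-GM: `a m |x y| ≤ m x² / 4 + a² m y²`
  have hcross : -(a * m * x * y) ≤ m / 4 * x ^ 2 + a ^ 2 * m * y ^ 2 := by
    nlinarith [mul_nonneg hm (sq_nonneg (x / 2 + a * y))]
  nlinarith [mul_nonneg ha (sq_nonneg y), mul_nonneg hm (sq_nonneg x)]

-- `μ` stands for `ε ξ`.
def IsSIRSolution_s3 (β γ μ : ℝ) (S I : ℝ → ℝ) : Prop :=
  ∀ t ≥ 0, HasDerivAt S (μ * (1 - S t) - β * S t * I t) t ∧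
    HasDerivAt I (I t * (β * S t - γ - μ)) t

namespace IsSIRSolution_s3

variable {β γ μ : ℝ} {S I : ℝ → ℝ}

theorem continuousOn_S (h : IsSIRSolution_s3 β γ μ S I) : ContinuousOn S (Ici 0) :=
  fun t ht => (h t ht).1.continuousAt.continuousWithinAt

theorem continuousOn_I (h : IsSIRSolution_s3 β γ μ S I) : ContinuousOn I (Ici 0) :=
  fun t ht => (h t ht).2.continuousAt.continuousWithinAt

theorem I_pos (h : IsSIRSolution_s3 β γ μ S I) (hI0 : 0 < I 0) : ∀ t ≥ 0, 0 < I t :=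
  pos_of_hasDerivAt_eq_sub_mul (g := fun t => γ + μ - β * S t) (h := 0)
    (continuousOn_const.sub (continuousOn_const.mul h.continuousOn_S))
    (fun t ht => (h t ht).2.congr_deriv (by simp only [Pi.zero_apply]; ring))
    (fun _ _ => le_rfl) hI0

theorem S_nonneg (h : IsSIRSolution_s3 β γ μ S I) (hμ : 0 ≤ μ) (hS0 : 0 ≤ S 0) :
    ∀ t ≥ 0, 0 ≤ S t :=
  nonneg_of_hasDerivAt_eq_sub_mul (g := fun t => μ + β * I t) (h := fun _ => μ)
    (continuousOn_const.add (continuousOn_const.mul h.continuousOn_I))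
    (fun t ht => (h t ht).1.congr_deriv (by ring)) (fun _ _ => hμ) hS0

theorem S_add_I_le_one (h : IsSIRSolution_s3 β γ μ S I) (hγ : 0 ≤ γ) (hI : ∀ t ≥ 0, 0 ≤ I t)
    (hsum : S 0 + I 0 ≤ 1) : ∀ t ≥ 0, S t + I t ≤ 1 := by
  have := nonneg_of_hasDerivAt_eq_sub_mul (f := fun t => 1 - S t - I t) (g := fun _ => μ)
    (h := fun t => γ * I t) continuousOn_const
    (fun t ht => (((hasDerivAt_const t 1).sub (h t ht).1).sub (h t ht).2).congr_deriv (by ring))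
    (fun t ht => mul_nonneg hγ (hI t ht)) (by linarith)
  exact fun t ht => by linarith [this t ht]

theorem exists_pos_le_S (h : IsSIRSolution_s3 β γ μ S I) (hβ : 0 ≤ β) (hμ : 0 < μ)
    (hS : ∀ t ≥ 0, 0 ≤ S t) (hI : ∀ t ≥ 0, I t ≤ 1) : ∃ σ > 0, ∀ t ≥ 1, σ ≤ S t := by
  set k := μ + β
  set c := μ / k
  have hk : 0 < k := by positivity
  have hmono := monotoneOn_mul_exp_of_hasDerivAt (f := fun t => S t - c) (g := fun _ => k)
    (G := fun t => k * t) (h := fun t => β * S t * (1 - I t))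
    (fun t _ => by simpa using (hasDerivAt_id t).const_mul k)
    (fun t ht => ((h t ht).1.sub_const c).congr_deriv (by simp only [c]; field_simp; ring))
    (fun t ht => mul_nonneg (mul_nonneg hβ (hS t ht)) (by linarith [hI t ht]))
  refine ⟨c * (1 - Real.exp (-k)), mul_pos (by positivity) (by simpa using hk), fun t ht => ?_⟩
  have h0t := hmono self_mem_Ici (show (0 : ℝ) ≤ t by linarith) (show (0 : ℝ) ≤ t by linarith)
  simp only [mul_zero, Real.exp_zero, mul_one] at h0t
  have hdecay : S t - c ≥ -c * Real.exp (-(k * t)) := by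
    have := mul_le_mul_of_nonneg_right h0t (Real.exp_pos (-(k * t))).le
    rw [mul_assoc, ← Real.exp_add, add_neg_cancel, Real.exp_zero, mul_one] at this
    nlinarith [hS 0 le_rfl, Real.exp_pos (-(k * t))]
  have hexp : Real.exp (-(k * t)) ≤ Real.exp (-k) := Real.exp_le_exp.mpr (by nlinarith)
  nlinarith [div_pos hμ hk]

theorem hasDerivAt_sirLyapunov (h : IsSIRSolution_s3 β γ μ S I) {SE IE a t : ℝ}
    (hSE : β * SE = γ + μ) (hIE : β * SE * IE = μ * (1 - SE)) (ht : 0 ≤ t) (hSt : 0 < S t)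
    (hIt : 0 < I t) :
    HasDerivAt (fun t => sirLyapunov SE IE a (S t, I t))
      (-((μ + β * IE) * (S t - SE) ^ 2) / S t + a * (β * I t * (S t - SE) ^ 2
        - (μ + β * IE) * (S t - SE) * (I t - IE) - β * S t * (I t - IE) ^ 2)) t := by
  obtain ⟨hSd, hId⟩ := h t ht
  rw [show μ * (1 - S t) - β * S t * I t
      = -((μ + β * IE) * (S t - SE)) - β * S t * (I t - IE) by linear_combination -hIE] at hSd
  rw [show I t * (β * S t - γ - μ) = β * I t * (S t - SE) by linear_combination I t * hSE] at hId
  have := (((hasDerivAt_volterra SE hSt.ne').comp t hSd).add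
    ((hasDerivAt_volterra IE hIt.ne').comp t hId)).add
    (((hSd.sub_const SE).mul (hId.sub_const IE)).const_mul a)
  refine this.congr_deriv ?_
  field_simp
  ring

theorem tendsto_endemic_of_bounds (h : IsSIRSolution_s3 β γ μ S I) (hβ : 0 < β) (hμ : 0 ≤ μ)
    {SE IE σ : ℝ} (hSE : β * SE = γ + μ) (hIE : β * SE * IE = μ * (1 - SE))
    (hSE0 : 0 < SE) (hSE1 : SE ≤ 1) (hIE0 : 0 < IE) (hIE1 : IE ≤ 1) (hσ : 0 < σ)
    (hbounds : ∀ t ≥ 1, σ ≤ S t ∧ S t ≤ 1 ∧ 0 < I t ∧ I t ≤ 1) :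
    Tendsto (fun t => (S t, I t)) atTop (𝓝 (SE, IE)) := by
  set m := μ + β * IE
  have hm : 0 < m := by positivity
  set a := min (1 / 4) (min (m / (4 * β)) (β * σ / (2 * m)))
  have ha : 0 < a := lt_min (by norm_num) (lt_min (by positivity) (by positivity))
  have ha4 : a ≤ 1 / 4 := min_le_left _ _
  have haβ : 4 * a * β ≤ m := by
    have : a ≤ m / (4 * β) := (min_le_right _ _).trans (min_le_left _ _)
    rw [le_div_iff₀ (by positivity)] at this; linarith
  have ham : 2 * a * m ≤ β * σ := by
    have : a ≤ β * σ / (2 * m) := (min_le_right _ _).trans (min_le_right _ _)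
    rw [le_div_iff₀ (by positivity)] at this; linarith
  set c := min (m / 2) (a * β * σ / 2)
  refine tendsto_of_hasDerivAt_lyapunov (V := sirLyapunov SE IE a) (T := 1) (c := c) (k := 1 / 8)
    (lt_min (by positivity) (by positivity)) (by norm_num) ?_
    (fun t ht => h.hasDerivAt_sirLyapunov hSE hIE (by linarith) (hσ.trans_le (hbounds t ht).1)
      (hbounds t ht).2.2.1) (fun t ht => ?_) (fun t ht => ?_)
  · have hfst : ContinuousAt (volterra SE ∘ Prod.fst) (SE, IE) :=
      (continuousAt_volterra SE hSE0.ne').comp continuousAt_fst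
    have hsnd : ContinuousAt (volterra IE ∘ Prod.snd) (SE, IE) :=
      (continuousAt_volterra IE hIE0.ne').comp continuousAt_snd
    exact (hfst.add hsnd).add (by fun_prop)
  · obtain ⟨hσS, hS1, -, hI1⟩ := hbounds t ht
    calc _ ≤ -(m / 2 * (S t - SE) ^ 2 + a * β * σ / 2 * (I t - IE) ^ 2) :=
          sirLyapunov_deriv_le hβ.le ha.le haβ ham (hσ.trans_le hσS) hσS hS1 hI1
      _ ≤ -(c * ((S t - SE) ^ 2 + (I t - IE) ^ 2)) := by
          nlinarith [mul_le_mul_of_nonneg_right (min_le_left (m / 2) (a * β * σ / 2))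
            (sq_nonneg (S t - SE)), mul_le_mul_of_nonneg_right
            (min_le_right (m / 2) (a * β * σ / 2)) (sq_nonneg (I t - IE))]
      _ ≤ -c * dist (S t, I t) (SE, IE) ^ 2 := by
          nlinarith [dist_sq_le_sq_add_sq (S t) (I t) SE IE,
            (lt_min (by positivity) (by positivity) : 0 < c)]
  · obtain ⟨hσS, hS1, hI0, hI1⟩ := hbounds t ht
    have hcross : -(a * ((S t - SE) ^ 2 + (I t - IE) ^ 2) / 2) ≤ a * ((S t - SE) * (I t - IE)) := by
      nlinarith [mul_nonneg ha.le (sq_nonneg (S t - SE + (I t - IE)))]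
    simp only [sirLyapunov, volterra_self, mul_zero, add_zero, sub_self]
    nlinarith [dist_sq_le_sq_add_sq (S t) (I t) SE IE,
      sq_sub_le_four_mul_volterra hSE0 hSE1 (hσ.trans_le hσS) hS1,
      sq_sub_le_four_mul_volterra hIE0 hIE1 hI0 hI1,
      mul_le_mul_of_nonneg_right ha4 (add_nonneg (sq_nonneg (S t - SE)) (sq_nonneg (I t - IE)))]

end IsSIRSolution_s3

/-- Global convergence to the endemic equilibrium for the fast-time SIR system
`S' = ε ξ (1 - S) - β S I`, `I' = I (β S - γ - ε ξ)` when `β > γ + ε ξ`. -/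
theorem sir_fast_global_convergence
    (β γ ξ ε : ℝ) (hβ : 0 < β) (hγ : 0 < γ) (hξ : 0 < ξ) (hε : 0 < ε)
    (hR : γ + ε * ξ < β)
    (SE IE : ℝ)
    (hSE : SE = (γ + ε * ξ) / β)
    (hIE : IE = ε * ξ * (1 - SE) / (β * SE))
    (S I : ℝ → ℝ)
    (hS : ∀ t : ℝ, 0 ≤ t → HasDerivAt S (ε * ξ * (1 - S t) - β * S t * I t) t)
    (hI : ∀ t : ℝ, 0 ≤ t → HasDerivAt I (I t * (β * S t - γ - ε * ξ)) t)
    (hS0 : 0 ≤ S 0) (hI0 : 0 < I 0) (hsum : S 0 + I 0 ≤ 1) :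
    Tendsto (fun t => (S t, I t)) atTop (nhds (SE, IE)) := by
  have hμ : 0 < ε * ξ := mul_pos hε hξ
  have hsol : IsSIRSolution_s3 β γ (ε * ξ) S I := fun t ht => ⟨hS t ht, hI t ht⟩
  have hIpos := hsol.I_pos hI0
  have hSnn := hsol.S_nonneg hμ.le hS0
  have hSI := hsol.S_add_I_le_one hγ.le (fun t ht => (hIpos t ht).le) hsum
  obtain ⟨σ, hσ, hσS⟩ := hsol.exists_pos_le_S hβ.le hμ hSnn
    (fun t ht => by linarith [hSI t ht, hSnn t ht])
  have hSE0 : 0 < SE := by rw [hSE]; positivity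
  have hSE1 : SE < 1 := by rw [hSE, div_lt_one hβ]; exact hR
  have hβSE : β * SE = γ + ε * ξ := by rw [hSE]; field_simp
  have hβSEIE : β * SE * IE = ε * ξ * (1 - SE) := by rw [hIE]; field_simp
  have hIE0 : 0 < IE := by rw [hIE]; exact div_pos (by nlinarith) (by positivity)
  have hIE1 : IE ≤ 1 := by nlinarith
  refine hsol.tendsto_endemic_of_bounds hβ hμ.le hβSE hβSEIE hSE0 hSE1.le hIE0 hIE1 hσ
    fun t ht => ?_
  have ht0 : (0 : ℝ) ≤ t := by linarith
  exact ⟨hσS t ht, by linarith [hSI t ht0, hIpos t ht0], hIpos t ht0,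
    by linarith [hSI t ht0, hSnn t ht0]⟩
end

section
/- Let R₀ > 1 and let u₀ ∈ (−1, 0). Then there exists a unique p ∈ (0, R₀ − 1) such that u₀ − p − (R₀ − 1)·log((R₀ − 1 − p)/(R₀ − 1 − u₀)) = 0. (This p is the entry–exit image p₀(u₀), characterized by the vanishing of the entry–exit integral ∫_{u₀}^{p} u/(R₀ − 1 − u) du.) -/
/-!
Put `c = R₀ - 1` and `g(x) = x + c log (c - x)`. Then `g' (x) = -x / (c - x)`, so `g` increases on
`(-∞, 0]`, decreases on `[0, c)` and tends to `-∞` at `c⁻`; the equation says `g p = g u₀`. Since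
`g u₀ < g 0`, the intermediate value theorem on `[0, c)` gives a solution there and strict
monotonicity makes it unique.
-/

open Real Set Filter Topology

namespace EntryExit

/-- The entry–exit integral `∫ₐᵇ u / (c - u) du` equals
`entryExitPotential c a - entryExitPotential c b`. -/
noncomputable def entryExitPotential (c x : ℝ) : ℝ := x + c * log (c - x)

variable {c : ℝ}

theorem hasDerivAt_entryExitPotential {x : ℝ} (hx : x < c) :
    HasDerivAt (entryExitPotential c) (-x / (c - x)) x := by
  have hcx : c - x ≠ 0 := (sub_pos.2 hx).ne'
  have h : HasDerivAt (fun y => y + c * log (c - y)) (1 + c * (-1 / (c - x))) x :=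
    (hasDerivAt_id' x).add (((hasDerivAt_id' x).const_sub c).log hcx |>.const_mul c)
  exact h.congr_deriv (by field_simp; ring)

theorem continuousOn_entryExitPotential : ContinuousOn (entryExitPotential c) (Iio c) :=
  fun _ hx => (hasDerivAt_entryExitPotential hx).continuousAt.continuousWithinAt

theorem strictMonoOn_entryExitPotential (hc : 0 < c) :
    StrictMonoOn (entryExitPotential c) (Iic 0) := by
  have hsub : Iic (0 : ℝ) ⊆ Iio c := fun x hx => lt_of_le_of_lt hx hc
  refine strictMonoOn_of_deriv_pos (convex_Iic 0) (continuousOn_entryExitPotential.mono hsub) ?_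
  intro x hx
  rw [interior_Iic] at hx
  rw [(hasDerivAt_entryExitPotential (hsub (mem_Iic.2 hx.le))).deriv]
  exact div_pos (neg_pos.2 hx) (sub_pos.2 (hx.trans hc))

theorem strictAntiOn_entryExitPotential : StrictAntiOn (entryExitPotential c) (Ico 0 c) := by
  refine strictAntiOn_of_deriv_neg (convex_Ico 0 c)
    (continuousOn_entryExitPotential.mono fun _ hx => hx.2) ?_
  intro x hx
  rw [interior_Ico] at hx
  rw [(hasDerivAt_entryExitPotential hx.2).deriv]
  exact div_neg_of_neg_of_pos (neg_neg_of_pos hx.1) (sub_pos.2 hx.2)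

theorem tendsto_entryExitPotential_atBot (hc : 0 < c) :
    Tendsto (entryExitPotential c) (𝓝[<] c) atBot := by
  have hgap : Tendsto (fun x => c - x) (𝓝[<] c) (𝓝[>] 0) := by
    refine tendsto_nhdsWithin_iff.2 ⟨?_, eventually_nhdsWithin_of_forall fun x hx => ?_⟩
    · exact ((continuous_sub_left c).tendsto' c 0 (sub_self c)).mono_left nhdsWithin_le_nhds
    · exact mem_Ioi.2 (sub_pos.2 hx)
  exact tendsto_nhdsWithin_of_tendsto_nhds tendsto_id |>.add_atBot
    ((tendsto_log_nhdsGT_zero.comp hgap).const_mul_atBot hc)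

theorem existsUnique_entryExitPotential_eq (hc : 0 < c) {a : ℝ} (ha : a < 0) :
    ∃! p, p ∈ Ioo 0 c ∧ entryExitPotential c p = entryExitPotential c a := by
  have hlt : entryExitPotential c a < entryExitPotential c 0 :=
    strictMonoOn_entryExitPotential hc (mem_Iic.2 ha.le) (mem_Iic.2 le_rfl) ha
  obtain ⟨b, hb_below, hb⟩ :=
    (((tendsto_entryExitPotential_atBot hc).eventually
      (eventually_lt_atBot (entryExitPotential c a))).and (Ioo_mem_nhdsLT hc)).exists
  have hcont : ContinuousOn (entryExitPotential c) (Icc 0 b) :=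
    continuousOn_entryExitPotential.mono fun x hx => lt_of_le_of_lt hx.2 hb.2
  obtain ⟨p, hp, hp_eq⟩ := intermediate_value_Ioo' hb.1.le hcont ⟨hb_below, hlt⟩
  refine ⟨p, ⟨⟨hp.1, hp.2.trans hb.2⟩, hp_eq⟩, fun q ⟨hq, hq_eq⟩ => ?_⟩
  exact strictAntiOn_entryExitPotential.injOn (Ioo_subset_Ico_self hq)
    ⟨hp.1.le, hp.2.trans hb.2⟩ (hq_eq.trans hp_eq.symm)

theorem sub_sub_mul_log_div_eq {a p : ℝ} (ha : a < c) (hp : p < c) :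
    a - p - c * log ((c - p) / (c - a)) = entryExitPotential c a - entryExitPotential c p := by
  rw [log_div (sub_pos.2 hp).ne' (sub_pos.2 ha).ne', entryExitPotential, entryExitPotential]
  ring

end EntryExit

open EntryExit in
/-- Existence and uniqueness of the entry–exit image `p₀(u₀)` for the SIR model. -/
theorem entry_exit_unique_exit
    (R₀ : ℝ) (hR₀ : 1 < R₀) (u₀ : ℝ) (hu₀ : u₀ ∈ Set.Ioo (-1 : ℝ) 0) :
    ∃! p : ℝ, p ∈ Set.Ioo (0 : ℝ) (R₀ - 1) ∧
      u₀ - p - (R₀ - 1) * Real.log ((R₀ - 1 - p) / (R₀ - 1 - u₀)) = 0 := by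
  have hc : 0 < R₀ - 1 := sub_pos.2 hR₀
  refine (existsUnique_congr fun p => and_congr_right fun hp => ?_).1
    (existsUnique_entryExitPotential_eq hc hu₀.2)
  rw [sub_sub_mul_log_div_eq (hu₀.2.trans hc) hp.2, sub_eq_zero, eq_comm]
end

section
/- Let 0 < a < b < 1. Define F(x) = x − a + (1 − b)·log((1 − x)/(1 − a)) and G(x) = x − a + b·log(a/x). If x* ∈ (a, 1) satisfies F(x*) = 0, then G(x*) < 0. -/
/-!
Everything rests on the logarithmic-mean inequality `log (q / p) > 2 (q - p) / (q + p)` for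
`0 < p < q`. Applied to `1 - x < 1 - a`, the equation `F x = 0` forces `x + a < 2 b`; applied to
`a < x`, this gives `b log (x / a) > 2 b (x - a) / (x + a) > x - a`, i.e. `G x < 0`.
-/

open Real

theorem two_mul_sub_div_add_lt_log_div {p q : ℝ} (hp : 0 < p) (hpq : p < q) :
    2 * (q - p) / (q + p) < log (q / p) := by
  -- `log (q / p) = 2 artanh t`, and the Taylor series of `artanh` has positive terms.
  set t := (q - p) / (q + p) with ht
  have ht0 : 0 < t := div_pos (by linarith) (by linarith)
  have ht1 : t < 1 := (div_lt_one (by linarith)).2 (by linarith)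
  have hratio : (1 + t) / (1 - t) = q / p := by
    have hqp : q + p ≠ 0 := by linarith
    rw [ht, one_add_div hqp, one_sub_div hqp, div_div_div_cancel_right₀ hqp,
      div_eq_div_iff (by linarith) hp.ne']
    ring
  have hseries : t + t ^ 3 / 3 ≤ 1 / 2 * log (q / p) := by
    have h := sum_range_le_log_div ht0.le ht1 2
    norm_num [Finset.sum_range_succ, hratio] at h ⊢
    exact h
  calc 2 * (q - p) / (q + p) = 2 * t := by rw [ht, mul_div_assoc]
    _ < 2 * (t + t ^ 3 / 3) := by have := pow_pos ht0 3; linarith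
    _ ≤ log (q / p) := by linarith

theorem F_zero_implies_G_neg_general
    (a b : ℝ) (ha : 0 < a) (hb : b < 1)
    (x : ℝ) (hx : x ∈ Set.Ioo a 1)
    (hF : x - a + (1 - b) * Real.log ((1 - x) / (1 - a)) = 0) :
    x - a + b * Real.log (a / x) < 0 := by
  obtain ⟨hax, hx1⟩ := hx
  have hF' : (1 - b) * log ((1 - a) / (1 - x)) = x - a := by
    rw [← inv_div, log_inv]; linarith
  have hmid : x + a < 2 * b := by
    have h := two_mul_sub_div_add_lt_log_div (p := 1 - x) (q := 1 - a) (by linarith) (by linarith)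
    rw [div_lt_iff₀ (by linarith)] at h
    nlinarith
  have hlog : (x - a) / b < log (x / a) := calc
    (x - a) / b < 2 * (x - a) / (x + a) := by
      rw [div_lt_div_iff₀ (by linarith) (by linarith)]; nlinarith
    _ < log (x / a) := two_mul_sub_div_add_lt_log_div ha hax
  rw [div_lt_iff₀ (by linarith)] at hlog
  rw [← inv_div, log_inv]
  linarith

/-- If `F(x*) = 0` for `x* ∈ (a, 1)` then `G(x*) < 0`, where
`F(x) = x - a + (1 - b) log((1 - x)/(1 - a))` and `G(x) = x - a + b log(a/x)`. -/
theorem F_zero_implies_G_neg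
    (a b : ℝ) (ha : 0 < a) (hab : a < b) (hb : b < 1)
    (x : ℝ) (hx : x ∈ Set.Ioo a 1)
    (hF : x - a + (1 - b) * Real.log ((1 - x) / (1 - a)) = 0) :
    x - a + b * Real.log (a / x) < 0 :=
  F_zero_implies_G_neg_general a b ha hb x hx hF
end

section
/- Let 0 < b < 1 and S₀ ∈ (b, 1). Let P₀ ∈ (0, b) be such that b·log P₀ − P₀ = b·log S₀ − S₀ (so (P₀, 0) and (S₀, 0) lie on the same level set of the first-integral of the layer equation), and let S₁ ∈ (b, 1) be such that S₁ − P₀ + (1 − b)·log((1 − S₁)/(1 − P₀)) = 0 (so S₁ is the exit point determined by the entry–exit function applied to the entry point P₀). Then S₁ < S₀; i.e., the Poincaré map Π = Π₂ ∘ Π₁ of the fast–slow SIR dynamics satisfies Π(S₀) < S₀. -/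
/-!
Along the fast flow `S - b log S` is conserved, so `S₀ - P₀ = b (log S₀ - log P₀)`; since the
logarithmic mean of `P₀, S₀` is below their arithmetic mean, this gives `b < (S₀ + P₀) / 2`.
Applying the same mean inequality to `1 - S₀, 1 - P₀` then shows that the exit function
`x ↦ x + (1 - b) log (1 - x)`, which is decreasing on `[b, 1)` and takes at `S₁` its value at `P₀`,
is already below that value at `S₀`. Hence `S₁ < S₀`.
-/

open Real

lemma two_mul_lt_log_one_add_sub_log_one_sub {t : ℝ} (ht₀ : 0 < t) (ht₁ : t < 1) :
    2 * t < log (1 + t) - log (1 - t) := by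
  have hsum := hasSum_log_sub_log_of_abs_lt_one (abs_lt.2 ⟨by linarith, ht₁⟩)
  have htwo_terms := sum_le_hasSum (Finset.range 2) (fun k _ => by positivity) hsum
  norm_num [Finset.sum_range_succ] at htwo_terms
  nlinarith [pow_pos ht₀ 3]

/-- The logarithmic mean of two distinct positive numbers is below their arithmetic mean. -/
lemma two_mul_sub_lt_add_mul_log_sub_log {x y : ℝ} (hx : 0 < x) (hxy : x < y) :
    2 * (y - x) < (y + x) * (log y - log x) := by
  have hy : 0 < y := hx.trans hxy
  have hsum : 0 < y + x := by linarith
  have hlog : log (1 + (y - x) / (y + x)) - log (1 - (y - x) / (y + x)) = log y - log x := by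
    have h₁ : 1 + (y - x) / (y + x) = 2 / (y + x) * y := by field_simp; ring
    have h₂ : 1 - (y - x) / (y + x) = 2 / (y + x) * x := by field_simp; ring
    rw [h₁, h₂, log_mul (by positivity) hy.ne', log_mul (by positivity) hx.ne']
    ring
  have key := two_mul_lt_log_one_add_sub_log_one_sub (div_pos (sub_pos.2 hxy) hsum)
    ((div_lt_one hsum).2 (by linarith))
  rw [hlog, ← mul_div_assoc, div_lt_iff₀ hsum] at key
  linarith

lemma antitoneOn_add_one_sub_mul_log_one_sub (a : ℝ) :
    AntitoneOn (fun x => x + (1 - a) * log (1 - x)) (Set.Ico a 1) := by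
  intro x ⟨hax, hx1⟩ y ⟨_, hy1⟩ hxy
  have hx : 0 < 1 - x := by linarith
  have hlog : log ((1 - y) / (1 - x)) ≤ (1 - y) / (1 - x) - 1 :=
    log_le_sub_one_of_pos (div_pos (by linarith) hx)
  rw [log_div (by linarith) hx.ne', div_sub_one hx.ne', le_div_iff₀ hx] at hlog
  dsimp only
  nlinarith

theorem poincare_map_decreasing_general
    (b S₀ P₀ S₁ : ℝ)
    (hS₀ : S₀ ∈ Set.Ioo b 1)
    (hP₀ : P₀ ∈ Set.Ioo 0 b)
    (hP₀eq : b * Real.log P₀ - P₀ = b * Real.log S₀ - S₀)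
    (hS₁ : S₁ ∈ Set.Ioo b 1)
    (hS₁eq : S₁ - P₀ + (1 - b) * Real.log ((1 - S₁) / (1 - P₀)) = 0) :
    S₁ < S₀ := by
  obtain ⟨hbS₀, hS₀1⟩ := hS₀
  obtain ⟨hP₀0, hP₀b⟩ := hP₀
  have hb_lt_mean : 2 * b < S₀ + P₀ := by
    have hmean := two_mul_sub_lt_add_mul_log_sub_log hP₀0 (hP₀b.trans hbS₀)
    have hfast : S₀ - P₀ = b * (log S₀ - log P₀) := by linarith
    nlinarith
  have hS₀_exit : S₀ + (1 - b) * log (1 - S₀) < P₀ + (1 - b) * log (1 - P₀) := by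
    have hmean := two_mul_sub_lt_add_mul_log_sub_log (x := 1 - S₀) (y := 1 - P₀)
      (by linarith) (by linarith)
    have hlog_pos : 0 < log (1 - P₀) - log (1 - S₀) := by
      rw [sub_pos]; exact log_lt_log (by linarith) (by linarith)
    nlinarith
  have hS₁_exit : S₁ + (1 - b) * log (1 - S₁) = P₀ + (1 - b) * log (1 - P₀) := by
    rw [log_div (by linarith [hS₁.2]) (by linarith)] at hS₁eq
    linarith
  exact (antitoneOn_add_one_sub_mul_log_one_sub b).reflect_lt ⟨hbS₀.le, hS₀1⟩
    ⟨hS₁.1.le, hS₁.2⟩ (by simp only [hS₁_exit, hS₀_exit])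

/-- The Poincaré map `Π = Π₂ ∘ Π₁` of the fast–slow SIR dynamics moves points to
the left: `S₁ = Π(S₀) < S₀`. Here `b` plays the role of `1/R₀ = γ/β`. -/
theorem poincare_map_decreasing
    (b S₀ P₀ S₁ : ℝ) (hb : 0 < b) (hb1 : b < 1)
    (hS₀ : S₀ ∈ Set.Ioo b 1)
    (hP₀ : P₀ ∈ Set.Ioo 0 b)
    (hP₀eq : b * Real.log P₀ - P₀ = b * Real.log S₀ - S₀)
    (hS₁ : S₁ ∈ Set.Ioo b 1)
    (hS₁eq : S₁ - P₀ + (1 - b) * Real.log ((1 - S₁) / (1 - P₀)) = 0) :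
    S₁ < S₀ :=
  poincare_map_decreasing_general b S₀ P₀ S₁ hS₀ hP₀ hP₀eq hS₁ hS₁eq
end

section
/- Let 0 < b < 1 and S₀ ∈ (b, 1). Define recursively the sequences (Sₙ) and (Pₙ) by: Pₙ is the unique element of (0, b) with b·log Pₙ − Pₙ = b·log Sₙ − Sₙ, and S_{n+1} is the unique element of (b, 1) with S_{n+1} − Pₙ + (1 − b)·log((1 − S_{n+1})/(1 − Pₙ)) = 0. Then these sequences are well defined for all n, (Sₙ) is strictly decreasing and bounded below by b, (Pₙ) is strictly increasing and bounded above by b, and both sequences converge to b. -/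
/-!
`Π₁` preserves `fastInv b x = b log x - x` and `Π₂` preserves
`slowInv b x = x + (1 - b) log (1 - x)`. The combination `(1 - b) slowInv - b fastInv` has
derivative `-(x - b)² / (x (1 - x))`, so it strictly decreases on `(0, 1)`. Since `Pₙ < b < Sₙ`
share `fastInv`, this gives `slowInv Sₙ < slowInv Pₙ = slowInv Sₙ₊₁`, and as `slowInv` decreases
on `[b, 1)`, `Sₙ₊₁ < Sₙ`; as `fastInv` decreases on `[b, ∞)` and increases on `(0, b]`, `Pₙ`
increases. The limits `M ≤ b ≤ L` share both invariants, hence the value of the combination,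
so `M = L = b`.
-/

open Filter

namespace Poincare

open Set Real Topology

noncomputable def fastInv (b x : ℝ) : ℝ := b * log x - x

noncomputable def slowInv (b x : ℝ) : ℝ := x + (1 - b) * log (1 - x)

noncomputable def combinedInv (b x : ℝ) : ℝ := (1 - b) * slowInv b x - b * fastInv b x

lemma hasDerivAt_fastInv (b : ℝ) {x : ℝ} (hx : x ≠ 0) :
    HasDerivAt (fastInv b) ((b - x) / x) x :=
  (((hasDerivAt_log hx).const_mul b).sub (hasDerivAt_id x)).congr_deriv (by field_simp)

lemma hasDerivAt_slowInv (b : ℝ) {x : ℝ} (hx : x ≠ 1) :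
    HasDerivAt (slowInv b) ((b - x) / (1 - x)) x := by
  have hx' : 1 - x ≠ 0 := sub_ne_zero.mpr hx.symm
  have hlog : HasDerivAt (fun y => log (1 - y)) (-1 / (1 - x)) x := by
    simpa [div_eq_inv_mul] using ((hasDerivAt_id x).const_sub 1).log hx'
  exact ((hasDerivAt_id x).add (hlog.const_mul (1 - b))).congr_deriv (by field_simp; ring)

lemma hasDerivAt_combinedInv (b : ℝ) {x : ℝ} (hx0 : x ≠ 0) (hx1 : x ≠ 1) :
    HasDerivAt (combinedInv b) (-(x - b) ^ 2 / (x * (1 - x))) x := by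
  exact (((hasDerivAt_slowInv b hx1).const_mul (1 - b)).sub
    ((hasDerivAt_fastInv b hx0).const_mul b)).congr_deriv (by field_simp; ring)

lemma strictMonoOn_fastInv (b : ℝ) : StrictMonoOn (fastInv b) (Ioc 0 b) := by
  refine strictMonoOn_of_hasDerivWithinAt_pos (f' := fun x => (b - x) / x) (convex_Ioc 0 b)
    (fun x hx => (hasDerivAt_fastInv b hx.1.ne').continuousAt.continuousWithinAt) ?_ ?_
    <;> rw [interior_Ioc]
  · exact fun x hx => (hasDerivAt_fastInv b hx.1.ne').hasDerivWithinAt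
  · exact fun x hx => div_pos (sub_pos.mpr hx.2) hx.1

lemma strictAntiOn_fastInv {b : ℝ} (hb : 0 < b) : StrictAntiOn (fastInv b) (Ici b) := by
  refine strictAntiOn_of_hasDerivWithinAt_neg (f' := fun x => (b - x) / x) (convex_Ici b)
    (fun x hx => (hasDerivAt_fastInv b (hb.trans_le hx).ne').continuousAt.continuousWithinAt)
    ?_ ?_ <;> rw [interior_Ici]
  · exact fun x hx => (hasDerivAt_fastInv b (hb.trans hx).ne').hasDerivWithinAt
  · exact fun x hx => div_neg_of_neg_of_pos (sub_neg.mpr hx) (hb.trans hx)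

lemma strictMonoOn_slowInv {b : ℝ} (hb1 : b < 1) : StrictMonoOn (slowInv b) (Iic b) := by
  refine strictMonoOn_of_hasDerivWithinAt_pos (f' := fun x => (b - x) / (1 - x)) (convex_Iic b)
    (fun x hx => (hasDerivAt_slowInv b (hx.trans_lt hb1).ne).continuousAt.continuousWithinAt)
    ?_ ?_ <;> rw [interior_Iic]
  · exact fun x hx => (hasDerivAt_slowInv b (hx.trans hb1).ne).hasDerivWithinAt
  · exact fun x hx => div_pos (sub_pos.mpr hx) (sub_pos.mpr (hx.trans hb1))

lemma strictAntiOn_slowInv (b : ℝ) : StrictAntiOn (slowInv b) (Ico b 1) := by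
  refine strictAntiOn_of_hasDerivWithinAt_neg (f' := fun x => (b - x) / (1 - x))
    (convex_Ico b 1) (fun x hx => (hasDerivAt_slowInv b hx.2.ne).continuousAt.continuousWithinAt)
    ?_ ?_ <;> rw [interior_Ico]
  · exact fun x hx => (hasDerivAt_slowInv b hx.2.ne).hasDerivWithinAt
  · exact fun x hx => div_neg_of_neg_of_pos (sub_neg.mpr hx.1) (sub_pos.mpr hx.2)

lemma strictAntiOn_combinedInv {b : ℝ} (hb : 0 < b) (hb1 : b < 1) :
    StrictAntiOn (combinedInv b) (Ioo 0 1) := by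
  have hderiv (x : ℝ) (hx : x ∈ Ioo (0 : ℝ) 1) :
      HasDerivAt (combinedInv b) (-(x - b) ^ 2 / (x * (1 - x))) x :=
    hasDerivAt_combinedInv b hx.1.ne' hx.2.ne
  have hpiece (D : Set ℝ) (hD : D ⊆ Ioo 0 1) (hconv : Convex ℝ D) (hbD : b ∉ interior D) :
      StrictAntiOn (combinedInv b) D :=
    strictAntiOn_of_hasDerivWithinAt_neg hconv
      (fun x hx => (hderiv x (hD hx)).continuousAt.continuousWithinAt)
      (fun x hx => (hderiv x (hD (interior_subset hx))).hasDerivWithinAt)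
      fun x hx => div_neg_of_neg_of_pos
        (neg_neg_of_pos (sq_pos_of_ne_zero (sub_ne_zero.mpr (ne_of_mem_of_not_mem hx hbD))))
        (mul_pos (hD (interior_subset hx)).1 (sub_pos.mpr (hD (interior_subset hx)).2))
  rw [← Ioc_union_Ico_eq_Ioo hb hb1]
  exact (hpiece _ (Ioc_subset_Ioo_right hb1) (convex_Ioc 0 b) (by simp)).union
    (hpiece _ (Ico_subset_Ioo_left hb) (convex_Ico b 1) (by simp))
    (isGreatest_Ioc hb) (isLeast_Ico hb1)

lemma exists_mem_Ioo_fastInv_eq {b S : ℝ} (hb : 0 < b) (hS : b < S) :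
    ∃ P ∈ Ioo 0 b, fastInv b P = fastInv b S := by
  set c := fastInv b S
  have hc : c < fastInv b b := strictAntiOn_fastInv hb self_mem_Ici hS.le hS
  set x₀ := exp (c / b)
  have hx₀ : fastInv b x₀ = c - x₀ := by
    simp only [fastInv, x₀, log_exp]
    field_simp
  have hx₀b : x₀ < b := by
    refine (exp_lt_exp.mpr ?_).trans_eq (exp_log hb)
    rw [div_lt_iff₀ hb]
    simp only [fastInv] at hc
    linarith
  have hcont : ContinuousOn (fastInv b) (Icc x₀ b) := fun x hx =>
    (hasDerivAt_fastInv b (exp_pos _ |>.trans_le hx.1).ne').continuousAt.continuousWithinAt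
  obtain ⟨P, hP, hPc⟩ := intermediate_value_Ioo hx₀b.le hcont
    ⟨by linarith [exp_pos (c / b)], hc⟩
  exact ⟨P, ⟨(exp_pos _).trans hP.1, hP.2⟩, hPc⟩

lemma exists_mem_Ioo_slowInv_eq {b P : ℝ} (hb1 : b < 1) (hP : P < b) :
    ∃ S ∈ Ioo b 1, slowInv b S = slowInv b P := by
  set c := slowInv b P
  have hc : c < slowInv b b := strictMonoOn_slowInv hb1 hP.le self_mem_Iic hP
  set x₁ := 1 - exp ((c - 1) / (1 - b))
  have hx₁ : slowInv b x₁ = x₁ + c - 1 := by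
    simp only [slowInv, x₁, sub_sub_cancel, log_exp]
    field_simp [(sub_pos.mpr hb1).ne']
    ring
  have hx₁1 : x₁ < 1 := sub_lt_self 1 (exp_pos _)
  have hbx₁ : b < x₁ := by
    have : exp ((c - 1) / (1 - b)) < 1 - b := by
      refine (exp_lt_exp.mpr ?_).trans_eq (exp_log (sub_pos.mpr hb1))
      rw [div_lt_iff₀ (sub_pos.mpr hb1)]
      simp only [slowInv] at hc
      linarith
    linarith
  have hcont : ContinuousOn (slowInv b) (Icc b x₁) := fun x hx =>
    (hasDerivAt_slowInv b (hx.2.trans_lt hx₁1).ne).continuousAt.continuousWithinAt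
  obtain ⟨S, hS, hSc⟩ := intermediate_value_Ioo' hbx₁.le hcont ⟨by linarith, hc⟩
  exact ⟨S, ⟨hS.1, hS.2.trans hx₁1⟩, hSc⟩

/-- The map `Π₁`; `invFunOn` makes it total, with a junk value when `S ≤ b`. -/
noncomputable def fastMap (b S : ℝ) : ℝ := Function.invFunOn (fastInv b) (Ioo 0 b) (fastInv b S)

/-- The map `Π₂`; `invFunOn` makes it total, with a junk value when `b ≤ P`. -/
noncomputable def slowMap (b P : ℝ) : ℝ := Function.invFunOn (slowInv b) (Ioo b 1) (slowInv b P)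

noncomputable def poincareMap (b : ℝ) : ℝ → ℝ := slowMap b ∘ fastMap b

section Maps

variable {b : ℝ}

lemma fastMap_mem_Ioo (hb : 0 < b) {S : ℝ} (hS : b < S) : fastMap b S ∈ Ioo 0 b :=
  Function.invFunOn_mem (exists_mem_Ioo_fastInv_eq hb hS)

lemma fastInv_fastMap (hb : 0 < b) {S : ℝ} (hS : b < S) : fastInv b (fastMap b S) = fastInv b S :=
  Function.invFunOn_eq (exists_mem_Ioo_fastInv_eq hb hS)

lemma eq_fastMap_of_fastInv_eq (hb : 0 < b) {S x : ℝ} (hS : b < S) (hx : x ∈ Ioo 0 b)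
    (hxS : fastInv b x = fastInv b S) : x = fastMap b S :=
  (strictMonoOn_fastInv b).injOn (Ioo_subset_Ioc_self hx)
    (Ioo_subset_Ioc_self (fastMap_mem_Ioo hb hS)) (hxS.trans (fastInv_fastMap hb hS).symm)

lemma slowMap_mem_Ioo (hb1 : b < 1) {P : ℝ} (hP : P < b) : slowMap b P ∈ Ioo b 1 :=
  Function.invFunOn_mem (exists_mem_Ioo_slowInv_eq hb1 hP)

lemma slowInv_slowMap (hb1 : b < 1) {P : ℝ} (hP : P < b) : slowInv b (slowMap b P) = slowInv b P :=
  Function.invFunOn_eq (exists_mem_Ioo_slowInv_eq hb1 hP)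

lemma eq_slowMap_of_slowInv_eq (hb1 : b < 1) {P x : ℝ} (hP : P < b) (hx : x ∈ Ioo b 1)
    (hxP : slowInv b x = slowInv b P) : x = slowMap b P :=
  (strictAntiOn_slowInv b).injOn (Ioo_subset_Ico_self hx)
    (Ioo_subset_Ico_self (slowMap_mem_Ioo hb1 hP)) (hxP.trans (slowInv_slowMap hb1 hP).symm)

lemma strictAntiOn_fastMap (hb : 0 < b) : StrictAntiOn (fastMap b) (Ioi b) := fun S hS T hT hST =>
  (strictMonoOn_fastInv b).lt_iff_lt (Ioo_subset_Ioc_self (fastMap_mem_Ioo hb hT))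
    (Ioo_subset_Ioc_self (fastMap_mem_Ioo hb hS)) |>.mp <| by
    rw [fastInv_fastMap hb hS, fastInv_fastMap hb hT]
    exact strictAntiOn_fastInv hb (Ioi_subset_Ici_self hS) (Ioi_subset_Ici_self hT) hST

lemma slowInv_lt_of_fastInv_eq (hb : 0 < b) (hb1 : b < 1) {P S : ℝ} (hP : P ∈ Ioo 0 b)
    (hS : S ∈ Ioo b 1) (hPS : fastInv b P = fastInv b S) : slowInv b S < slowInv b P := by
  have h := strictAntiOn_combinedInv hb hb1 ⟨hP.1, hP.2.trans hb1⟩ ⟨hb.trans hS.1, hS.2⟩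
    (hP.2.trans hS.1)
  simp only [combinedInv, hPS] at h
  exact lt_of_mul_lt_mul_left (by linarith) (sub_pos.mpr hb1).le

lemma mapsTo_poincareMap (hb : 0 < b) (hb1 : b < 1) : MapsTo (poincareMap b) (Ioo b 1) (Ioo b 1) :=
  fun _ hS => slowMap_mem_Ioo hb1 (fastMap_mem_Ioo hb hS.1).2

lemma poincareMap_lt (hb : 0 < b) (hb1 : b < 1) {S : ℝ} (hS : S ∈ Ioo b 1) :
    poincareMap b S < S := by
  have hP := fastMap_mem_Ioo hb hS.1
  refine (strictAntiOn_slowInv b).lt_iff_gt (Ioo_subset_Ico_self hS)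
    (Ioo_subset_Ico_self (mapsTo_poincareMap hb hb1 hS)) |>.mp ?_
  rw [poincareMap, Function.comp_apply, slowInv_slowMap hb1 hP.2]
  exact slowInv_lt_of_fastInv_eq hb hb1 hP hS (fastInv_fastMap hb hS.1)

end Maps

lemma slowInv_eq_slowInv_iff (b : ℝ) {x y : ℝ} (hx : x < 1) (hy : y < 1) :
    slowInv b x = slowInv b y ↔ x - y + (1 - b) * log ((1 - x) / (1 - y)) = 0 := by
  rw [log_div (sub_pos.mpr hx).ne' (sub_pos.mpr hy).ne', slowInv, slowInv]
  constructor <;> intro h <;> linarith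

lemma eq_of_fastInv_eq_of_slowInv_eq {b : ℝ} (hb : 0 < b) (hb1 : b < 1) {x y : ℝ}
    (hx : x ∈ Ioo 0 1) (hy : y ∈ Ioo 0 1) (hf : fastInv b x = fastInv b y)
    (hg : slowInv b x = slowInv b y) : x = y :=
  (strictAntiOn_combinedInv hb hb1).injOn hx hy (by simp only [combinedInv, hf, hg])

lemma tendsto_of_fastInv_eq_of_slowInv_eq {b : ℝ} (hb : 0 < b) (hb1 : b < 1) {S P : ℕ → ℝ}
    (hSanti : Antitone S) (hPmono : Monotone P) (hS : ∀ n, S n ∈ Ioo b 1)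
    (hP : ∀ n, P n ∈ Ioo 0 b) (hfast : ∀ n, fastInv b (P n) = fastInv b (S n))
    (hslow : ∀ n, slowInv b (S (n + 1)) = slowInv b (P n)) :
    Tendsto S atTop (𝓝 b) ∧ Tendsto P atTop (𝓝 b) := by
  obtain ⟨L, hSL⟩ : ∃ L, Tendsto S atTop (𝓝 L) :=
    ⟨_, tendsto_atTop_ciInf hSanti ⟨b, forall_mem_range.mpr fun n => (hS n).1.le⟩⟩
  obtain ⟨M, hPM⟩ : ∃ M, Tendsto P atTop (𝓝 M) :=
    ⟨_, tendsto_atTop_ciSup hPmono ⟨b, forall_mem_range.mpr fun n => (hP n).2.le⟩⟩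
  have hbL : b ≤ L := ge_of_tendsto' hSL fun n => (hS n).1.le
  have hL1 : L < 1 := (le_of_tendsto' hSL fun n => hSanti n.zero_le).trans_lt (hS 0).2
  have hMb : M ≤ b := le_of_tendsto' hPM fun n => (hP n).2.le
  have hM0 : 0 < M := (hP 0).1.trans_le (ge_of_tendsto' hPM fun n => hPmono n.zero_le)
  have hfastML : fastInv b M = fastInv b L := tendsto_nhds_unique
    ((hasDerivAt_fastInv b hM0.ne').continuousAt.tendsto.comp hPM)
    (by simpa only [Function.comp_def, hfast] using
      (hasDerivAt_fastInv b (hb.trans_le hbL).ne').continuousAt.tendsto.comp hSL)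
  have hslowML : slowInv b M = slowInv b L := tendsto_nhds_unique
    ((hasDerivAt_slowInv b (hMb.trans_lt hb1).ne).continuousAt.tendsto.comp hPM)
    (by simpa only [Function.comp_def, hslow] using (hasDerivAt_slowInv b hL1.ne).continuousAt
      |>.tendsto.comp (hSL.comp (tendsto_add_atTop_nat 1)))
  have hML : M = L := eq_of_fastInv_eq_of_slowInv_eq hb hb1 ⟨hM0, hMb.trans_lt hb1⟩
    ⟨hb.trans_le hbL, hL1⟩ hfastML hslowML
  have hLb : L = b := le_antisymm (hML ▸ hMb) hbL
  exact ⟨hLb ▸ hSL, hML.trans hLb ▸ hPM⟩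

end Poincare

open Poincare Set

/-- The sequences `(Sₙ)` and `(Pₙ)` generated by alternately applying the fast map
`Π₁` and the entry–exit map `Π₂` are well defined, monotone, and both converge to
`b = 1/R₀`. -/
theorem poincare_sequences_converge
    (b S₀ : ℝ) (hb : 0 < b) (hb1 : b < 1) (hS₀ : S₀ ∈ Set.Ioo b 1) :
    ∃ S P : ℕ → ℝ,
      S 0 = S₀ ∧
      (∀ n : ℕ, P n ∈ Set.Ioo 0 b ∧
        b * Real.log (P n) - P n = b * Real.log (S n) - S n) ∧
      (∀ n : ℕ, ∀ x ∈ Set.Ioo (0 : ℝ) b,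
        b * Real.log x - x = b * Real.log (S n) - S n → x = P n) ∧
      (∀ n : ℕ, S (n + 1) ∈ Set.Ioo b 1 ∧
        S (n + 1) - P n + (1 - b) * Real.log ((1 - S (n + 1)) / (1 - P n)) = 0) ∧
      (∀ n : ℕ, ∀ x ∈ Set.Ioo b 1,
        x - P n + (1 - b) * Real.log ((1 - x) / (1 - P n)) = 0 → x = S (n + 1)) ∧
      StrictAnti S ∧ (∀ n : ℕ, b < S n) ∧
      StrictMono P ∧ (∀ n : ℕ, P n < b) ∧
      Tendsto S atTop (nhds b) ∧ Tendsto P atTop (nhds b) := by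
  set S : ℕ → ℝ := fun n => (poincareMap b)^[n] S₀
  set P : ℕ → ℝ := fun n => fastMap b (S n)
  have hS : ∀ n, S n ∈ Ioo b 1 := fun n => (mapsTo_poincareMap hb hb1).iterate n hS₀
  have hP : ∀ n, P n ∈ Ioo 0 b := fun n => fastMap_mem_Ioo hb (hS n).1
  have hSsucc : ∀ n, S (n + 1) = slowMap b (P n) := fun n => Function.iterate_succ_apply' _ _ _
  have hSanti : StrictAnti S := strictAnti_nat_of_succ_lt fun n =>
    (Function.iterate_succ_apply' _ _ _).trans_lt (poincareMap_lt hb hb1 (hS n))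
  have hPmono : StrictMono P := strictMono_nat_of_lt_succ fun n =>
    strictAntiOn_fastMap hb (hS (n + 1)).1 (hS n).1 (hSanti n.lt_succ_self)
  have hfast : ∀ n, fastInv b (P n) = fastInv b (S n) := fun n => fastInv_fastMap hb (hS n).1
  have hslow : ∀ n, slowInv b (S (n + 1)) = slowInv b (P n) := fun n => by
    rw [hSsucc]; exact slowInv_slowMap hb1 (hP n).2
  have hslow_iff : ∀ n, ∀ x < 1, slowInv b x = slowInv b (P n) ↔
      x - P n + (1 - b) * Real.log ((1 - x) / (1 - P n)) = 0 := fun n x hx =>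
    slowInv_eq_slowInv_iff b hx ((hP n).2.trans hb1)
  obtain ⟨hSlim, hPlim⟩ := tendsto_of_fastInv_eq_of_slowInv_eq hb hb1 hSanti.antitone
    hPmono.monotone hS hP hfast hslow
  refine ⟨S, P, rfl, fun n => ⟨hP n, hfast n⟩,
    fun n x hx hxS => eq_fastMap_of_fastInv_eq hb (hS n).1 hx hxS,
    fun n => ⟨hS (n + 1), (hslow_iff n _ (hS (n + 1)).2).mp (hslow n)⟩,
    fun n x hx hxP => (hSsucc n).symm ▸ eq_slowMap_of_slowInv_eq hb1 (hP n).2 hx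
      ((hslow_iff n x hx.2).mpr hxP),
    hSanti, fun n => (hS n).1, hPmono, fun n => (hP n).2, hSlim, hPlim⟩
end

section
/- Let β, γ, ν > 0 and set R₀ = β/γ. Let (S, I, W) : [0, ∞) → ℝ³ solve the SIRWS layer equation S' = −β S I, I' = I(β S − γ), W' = −ν β I W, with S(t) > 0 and I(t) > 0 for all t ≥ 0, initial values S(0) = S₀, I(0) = I₀, W(0) = W₀, and suppose S(t) → S_∞ and I(t) → 0 as t → +∞. Then W(t) → W₀·exp(−ν R₀ (S₀ + I₀ − S_∞)) as t → +∞. -/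
/-! `W · exp(-ν R₀ (S + I))` is a first integral of the layer equation, because
`(S + I)' = -γ I`. Hence `W = W₀ exp(-ν R₀ (S₀ + I₀)) · exp(ν R₀ (S + I))`, and the limit follows
from `S + I → S_∞`. -/

open Filter Real

theorem eq_of_hasDerivAt_eq_zero_of_le {E : Type*} [NormedAddCommGroup E] [NormedSpace ℝ E]
    {f : ℝ → E} {a : ℝ} (hf : ∀ t, a ≤ t → HasDerivAt f 0 t) {t : ℝ} (ht : a ≤ t) :
    f t = f a :=
  constant_of_has_deriv_right_zero
    (fun x hx => (hf x hx.1).continuousAt.continuousWithinAt)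
    (fun x hx => (hf x hx.1).hasDerivWithinAt) t ⟨ht, le_rfl⟩

theorem hasDerivAt_sirws_first_integral {β γ ν : ℝ} (hγ : γ ≠ 0) {S I W : ℝ → ℝ} {t : ℝ}
    (hS : HasDerivAt S (-β * S t * I t) t) (hI : HasDerivAt I (I t * (β * S t - γ)) t)
    (hW : HasDerivAt W (-ν * β * I t * W t) t) :
    HasDerivAt (fun t => W t * exp (-(ν * (β / γ)) * (S t + I t))) 0 t := by
  have hSI : HasDerivAt (fun t => S t + I t) (-γ * I t) t :=
    (hS.add hI).congr_deriv (by ring)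
  refine (hW.mul (hSI.const_mul _).exp).congr_deriv ?_
  field_simp
  ring

theorem sirws_layer_W_limit_general
    (β γ ν : ℝ) (hγ : 0 < γ)
    (S I W : ℝ → ℝ) (S₀ I₀ W₀ Sinf : ℝ)
    (hS : ∀ t : ℝ, 0 ≤ t → HasDerivAt S (-β * S t * I t) t)
    (hI : ∀ t : ℝ, 0 ≤ t → HasDerivAt I (I t * (β * S t - γ)) t)
    (hW : ∀ t : ℝ, 0 ≤ t → HasDerivAt W (-ν * β * I t * W t) t)
    (hS0 : S 0 = S₀) (hI0 : I 0 = I₀) (hW0 : W 0 = W₀)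
    (hSlim : Tendsto S atTop (nhds Sinf))
    (hIlim : Tendsto I atTop (nhds 0)) :
    Tendsto W atTop
      (nhds (W₀ * Real.exp (-(ν * (β / γ) * (S₀ + I₀ - Sinf))))) := by
  set c := ν * (β / γ)
  set Φ : ℝ → ℝ := fun t => W t * exp (-c * (S t + I t))
  have hΦ_const : ∀ t, 0 ≤ t → Φ t = Φ 0 := fun t ht =>
    eq_of_hasDerivAt_eq_zero_of_le
      (fun t ht => hasDerivAt_sirws_first_integral hγ.ne' (hS t ht) (hI t ht) (hW t ht)) ht
  have hΦ_lim : Tendsto Φ atTop (nhds (Φ 0)) :=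
    tendsto_const_nhds.congr' <| (eventually_ge_atTop 0).mono fun t ht => (hΦ_const t ht).symm
  have hexp_lim : Tendsto (fun t => exp (c * (S t + I t))) atTop (nhds (exp (c * (Sinf + 0)))) :=
    (continuous_exp.tendsto _).comp ((hSlim.add hIlim).const_mul c)
  have hW_eq : W = fun t => Φ t * exp (c * (S t + I t)) := by
    funext t
    rw [mul_assoc, ← exp_add, neg_mul, neg_add_cancel, exp_zero, mul_one]
  rw [hW_eq]
  convert hΦ_lim.mul hexp_lim using 2
  simp only [Φ, hS0, hI0, hW0]
  rw [mul_assoc W₀, ← exp_add]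
  ring_nf

/-- Limit of the waning compartment along the SIRWS layer equation:
if `(S, I) → (S_∞, 0)` then `W → W₀ exp(-ν R₀ (S₀ + I₀ - S_∞))`, where `R₀ = β/γ`. -/
theorem sirws_layer_W_limit
    (β γ ν : ℝ) (hβ : 0 < β) (hγ : 0 < γ) (hν : 0 < ν)
    (S I W : ℝ → ℝ) (S₀ I₀ W₀ Sinf : ℝ)
    (hS : ∀ t : ℝ, 0 ≤ t → HasDerivAt S (-β * S t * I t) t)
    (hI : ∀ t : ℝ, 0 ≤ t → HasDerivAt I (I t * (β * S t - γ)) t)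
    (hW : ∀ t : ℝ, 0 ≤ t → HasDerivAt W (-ν * β * I t * W t) t)
    (hSpos : ∀ t : ℝ, 0 ≤ t → 0 < S t)
    (hIpos : ∀ t : ℝ, 0 ≤ t → 0 < I t)
    (hS0 : S 0 = S₀) (hI0 : I 0 = I₀) (hW0 : W 0 = W₀)
    (hSlim : Tendsto S atTop (nhds Sinf))
    (hIlim : Tendsto I atTop (nhds 0)) :
    Tendsto W atTop
      (nhds (W₀ * Real.exp (-(ν * (β / γ) * (S₀ + I₀ - Sinf))))) :=
  sirws_layer_W_limit_general β γ ν hγ S I W S₀ I₀ W₀ Sinf hS hI hW hS0 hI0 hW0 hSlim hIlim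
end

section
/- Let κ, ξ > 0, R₀ > 1, and let S_∞, W_∞ satisfy 0 ≤ S_∞, 0 ≤ W_∞, S_∞ + W_∞ ≤ 1 and S_∞ < 1/R₀. Set A = 2κ + ξ, B = 2κ(S_∞ + W_∞ − 1), C = S_∞ − 1. Then the exit-time equation −R₀·exp(−A T)·(A B T + A C + B)/A² + (R₀ − 1)·T + R₀·(A C + B)/A² = 0 has T = 0 as a solution and exactly one strictly positive solution T_E > 0. -/
/-!
The left-hand side of the exit-time equation is `F(T) = ∫₀^T (R₀ S(τ) - 1) dτ`. Hence `F(0) = 0`,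
`F'(0) = R₀ S_∞ - 1 < 0`, and `F` is strictly convex on `[0, ∞)` because
`S'(τ) = e^{-Aτ} (B - A C - A B τ)` with `B - A C = 2κ W_∞ + ξ (1 - S_∞) > 0` and `B ≤ 0`.
The exponential part of `F` is nonnegative for `T ≥ 0`, so `F` grows at least linearly with slope
`R₀ - 1 > 0`. A strictly convex function on `[0, ∞)` that starts by decreasing and tends to `∞`
takes its initial value exactly once more.
-/

open Real Set Filter Topology

section ConvexReturn

variable {f : ℝ → ℝ} {a f' : ℝ}

theorem exists_apply_lt_of_hasDerivWithinAt_Ioi_neg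
    (hderiv : HasDerivWithinAt f f' (Ioi a) a) (hf' : f' < 0) : ∃ t, a < t ∧ f t < f a := by
  have hslope : ∀ᶠ t in 𝓝[>] a, slope f a t < 0 :=
    ((hasDerivWithinAt_iff_tendsto_slope' self_notMem_Ioi).mp hderiv).eventually_lt_const hf'
  obtain ⟨t, hlt, ht⟩ := (hslope.and self_mem_nhdsWithin).exists
  exact ⟨t, ht, (slope_neg_iff_of_le ht.le).mp hlt⟩

theorem StrictConvexOn.existsUnique_apply_eq_of_hasDerivWithinAt_neg
    (hf : StrictConvexOn ℝ (Ici a) f) (hderiv : HasDerivWithinAt f f' (Ioi a) a) (hf' : f' < 0)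
    (htop : Tendsto f atTop atTop) : ∃! x, a < x ∧ f x = f a := by
  obtain ⟨t, hat, hft⟩ := exists_apply_lt_of_hasDerivWithinAt_Ioi_neg hderiv hf'
  have hcont : ContinuousOn f (Ici t) := by
    refine hf.convexOn.continuousOn_interior.mono ?_
    rw [interior_Ici]
    exact Ici_subset_Ioi.mpr hat
  obtain ⟨x, hxt, hfx⟩ := intermediate_value_Ioi hcont htop hft
  refine ⟨x, ⟨hat.trans hxt, hfx⟩, fun y ⟨hay, hfy⟩ => ?_⟩
  -- strict convexity forbids three points `a < u < v` with equal values
  have no_three_equal : ∀ u v, a < u → u < v → f u = f a → f v = f a → False := by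
    intro u v hau huv hfu hfv
    have := hf.lt_on_openSegment self_mem_Ici (mem_Ici.mpr (hau.trans huv).le)
      (hau.trans huv).ne (by rw [openSegment_eq_Ioo (hau.trans huv)]; exact ⟨hau, huv⟩)
    simp [hfu, hfv] at this
  by_contra hne
  rcases lt_or_gt_of_ne hne with h | h
  · exact no_three_equal y x hay h hfy hfx
  · exact no_three_equal x y (hat.trans hxt) h hfx hfy

end ConvexReturn

namespace SIRWS

noncomputable def slowS (A B C τ : ℝ) : ℝ := 1 + (C + B * τ) * exp (-A * τ)

noncomputable def exitTimeFun (R₀ A B C T : ℝ) : ℝ :=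
  -R₀ * exp (-A * T) * (A * B * T + A * C + B) / A ^ 2 + (R₀ - 1) * T + R₀ * (A * C + B) / A ^ 2

variable {R₀ A B C : ℝ}

theorem hasDerivAt_slowS (τ : ℝ) :
    HasDerivAt (slowS A B C) (exp (-A * τ) * (B - A * (C + B * τ))) τ := by
  have hexp : HasDerivAt (fun τ => exp (-A * τ)) (exp (-A * τ) * -A) τ := by
    simpa using ((hasDerivAt_id τ).const_mul (-A)).exp
  have hlin : HasDerivAt (fun τ => C + B * τ) B τ := by
    simpa using ((hasDerivAt_id τ).const_mul B).const_add C
  exact ((hlin.mul hexp).const_add 1).congr_deriv (by ring)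

theorem strictMonoOn_slowS (hA : 0 < A) (hB : B ≤ 0) (hBAC : A * C < B) :
    StrictMonoOn (slowS A B C) (Ici 0) := by
  refine strictMonoOn_of_deriv_pos (convex_Ici 0)
    (fun τ _ => (hasDerivAt_slowS τ).continuousAt.continuousWithinAt) fun τ hτ => ?_
  rw [interior_Ici, mem_Ioi] at hτ
  rw [(hasDerivAt_slowS τ).deriv]
  have : 0 < B - A * (C + B * τ) := by
    nlinarith [mul_nonneg hA.le (mul_nonneg (neg_nonneg.mpr hB) hτ.le)]
  positivity

theorem exitTimeFun_zero : exitTimeFun R₀ A B C 0 = 0 := by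
  simp only [exitTimeFun, mul_zero, exp_zero]
  ring

theorem hasDerivAt_exitTimeFun (hA : A ≠ 0) (T : ℝ) :
    HasDerivAt (exitTimeFun R₀ A B C) (R₀ * slowS A B C T - 1) T := by
  have hexp : HasDerivAt (fun T => exp (-A * T)) (exp (-A * T) * -A) T := by
    simpa using ((hasDerivAt_id T).const_mul (-A)).exp
  have hlin : HasDerivAt (fun T => A * B * T + A * C + B) (A * B) T := by
    simpa [add_assoc] using ((hasDerivAt_id T).const_mul (A * B)).add_const (A * C + B)
  have hid : HasDerivAt (fun T => (R₀ - 1) * T) (R₀ - 1) T := by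
    simpa using (hasDerivAt_id T).const_mul (R₀ - 1)
  refine (((((hexp.const_mul (-R₀)).mul hlin).div_const (A ^ 2)).add hid).add_const
    (R₀ * (A * C + B) / A ^ 2)).congr_deriv ?_
  simp only [slowS]
  field_simp
  ring

theorem strictConvexOn_exitTimeFun (hR₀ : 0 < R₀) (hA : 0 < A) (hB : B ≤ 0) (hBAC : A * C < B) :
    StrictConvexOn ℝ (Ici 0) (exitTimeFun R₀ A B C) := by
  have hderiv : deriv (exitTimeFun R₀ A B C) = fun T => R₀ * slowS A B C T - 1 :=
    funext fun T => (hasDerivAt_exitTimeFun hA.ne' T).deriv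
  refine StrictMonoOn.strictConvexOn_of_deriv (convex_Ici 0)
    (fun T _ => (hasDerivAt_exitTimeFun hA.ne' T).continuousAt.continuousWithinAt) ?_
  rw [hderiv, interior_Ici]
  intro x hx y hy hxy
  have := strictMonoOn_slowS hA hB hBAC (Ioi_subset_Ici_self hx) (Ioi_subset_Ici_self hy) hxy
  dsimp only
  gcongr

theorem tendsto_exitTimeFun_atTop (hR₀ : 1 < R₀) (hA : 0 < A) (hB : B ≤ 0) (hC : C ≤ 0) :
    Tendsto (exitTimeFun R₀ A B C) atTop atTop := by
  have hlin : Tendsto (fun T => (R₀ - 1) * T + R₀ * (A * C + B) / A ^ 2) atTop atTop :=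
    tendsto_atTop_add_const_right _ _ (tendsto_id.const_mul_atTop (sub_pos.mpr hR₀))
  refine tendsto_atTop_mono' _ ?_ hlin
  filter_upwards [eventually_ge_atTop 0] with T hT
  have hlinear : A * B * T + A * C + B ≤ 0 := by
    nlinarith [mul_nonneg hA.le (mul_nonneg (neg_nonneg.mpr hB) hT)]
  have hexp : 0 ≤ -R₀ * exp (-A * T) * (A * B * T + A * C + B) / A ^ 2 := by
    have : 0 ≤ R₀ * exp (-A * T) := by have := exp_pos (-A * T); positivity
    apply div_nonneg _ (sq_nonneg A)
    nlinarith [mul_nonneg this (neg_nonneg.mpr hlinear)]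
  simp only [exitTimeFun]
  linarith

end SIRWS

theorem sirws_exit_time_unique_general
    (κ ξ R₀ Sinf Winf A B C : ℝ) (hκ : 0 < κ) (hξ : 0 < ξ) (hR₀ : 1 < R₀)
    (hWinf : 0 ≤ Winf) (hsum : Sinf + Winf ≤ 1)
    (hSR : Sinf < 1 / R₀)
    (hA : A = 2 * κ + ξ)
    (hB : B = 2 * κ * (Sinf + Winf - 1))
    (hC : C = Sinf - 1) :
    (-R₀ * Real.exp (-A * 0) * (A * B * 0 + A * C + B) / A ^ 2
        + (R₀ - 1) * 0 + R₀ * (A * C + B) / A ^ 2 = 0) ∧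
    (∃! T : ℝ, 0 < T ∧
      -R₀ * Real.exp (-A * T) * (A * B * T + A * C + B) / A ^ 2
        + (R₀ - 1) * T + R₀ * (A * C + B) / A ^ 2 = 0) := by
  have hApos : 0 < A := by rw [hA]; positivity
  have hRS : R₀ * Sinf < 1 := by rwa [lt_div_iff₀ (by linarith), mul_comm] at hSR
  have hS1 : Sinf < 1 := by nlinarith
  have hBle : B ≤ 0 := by rw [hB]; nlinarith
  have hBAC : A * C < B := by rw [hA, hB, hC]; nlinarith
  have hC0 : C ≤ 0 := by rw [hC]; linarith
  have hslope : R₀ * SIRWS.slowS A B C 0 - 1 < 0 := by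
    simp only [SIRWS.slowS, mul_zero, add_zero, exp_zero, mul_one, hC]
    linarith
  obtain ⟨T, hT, huniq⟩ :=
    (SIRWS.strictConvexOn_exitTimeFun (by linarith) hApos hBle hBAC
      ).existsUnique_apply_eq_of_hasDerivWithinAt_neg
      (SIRWS.hasDerivAt_exitTimeFun hApos.ne' 0).hasDerivWithinAt hslope
      (SIRWS.tendsto_exitTimeFun_atTop hR₀ hApos hBle hC0)
  rw [SIRWS.exitTimeFun_zero] at hT huniq
  exact ⟨SIRWS.exitTimeFun_zero, T, hT, huniq⟩

/-- The exit-time equation for the slow SIRWS flow has `T = 0` as a solution and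
exactly one strictly positive solution `T_E > 0`. -/
theorem sirws_exit_time_unique
    (κ ξ R₀ Sinf Winf A B C : ℝ) (hκ : 0 < κ) (hξ : 0 < ξ) (hR₀ : 1 < R₀)
    (hSinf : 0 ≤ Sinf) (hWinf : 0 ≤ Winf) (hsum : Sinf + Winf ≤ 1)
    (hSR : Sinf < 1 / R₀)
    (hA : A = 2 * κ + ξ)
    (hB : B = 2 * κ * (Sinf + Winf - 1))
    (hC : C = Sinf - 1) :
    (-R₀ * Real.exp (-A * 0) * (A * B * 0 + A * C + B) / A ^ 2
        + (R₀ - 1) * 0 + R₀ * (A * C + B) / A ^ 2 = 0) ∧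
    (∃! T : ℝ, 0 < T ∧
      -R₀ * Real.exp (-A * T) * (A * B * T + A * C + B) / A ^ 2
        + (R₀ - 1) * T + R₀ * (A * C + B) / A ^ 2 = 0) :=
  sirws_exit_time_unique_general κ ξ R₀ Sinf Winf A B C hκ hξ hR₀ hWinf hsum hSR hA hB hC
end
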